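/- arXiv:2308.06470 — 7 statements merged into one kernel-verified Lean document; each statement's English description precedes it below -/
import Mathlib

section
/- If f : ℝ^n → ℝ is L-smooth and convex, then its convex conjugate f* is (1/L)-strongly convex. -/
/-!
The descent lemma `f z ≤ f x + ⟪∇f x, z - x⟫ + L/2 ‖z - x‖²`, applied at the point
`z = x + (y - ∇f x) / L` maximising `⟪z, y⟫` minus its right-hand side, gives
`f* y ≥ ⟪x, y⟫ - f x + ‖y - ∇f x‖² / (2L)` for every `x`. So `f*` is the supremum of the affine
functions `y ↦ ⟪x, y⟫ - f x`, each of which lies below `f*` by at least a quadratic of curvature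
`1/L`. By the identity `s‖a - p‖² + t‖b - p‖² = ‖s a + t b - p‖² + s t ‖a - b‖²` (for `s + t = 1`),
taking convex combinations of these quadratic gaps leaves a gap of `s t ‖a - b‖² / (2L)`, which is
`1/L`-strong convexity of `f*`.
-/

open RealInnerProductSpace Set

variable {E : Type*} [NormedAddCommGroup E] [InnerProductSpace ℝ E]

theorem mul_norm_sub_sq_add_mul_norm_sub_sq {a b : ℝ} (hab : a + b = 1) (x y p : E) :
    a * ‖x - p‖ ^ 2 + b * ‖y - p‖ ^ 2 = ‖a • x + b • y - p‖ ^ 2 + a * b * ‖x - y‖ ^ 2 := by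
  obtain rfl := eq_sub_of_add_eq hab
  rw [show (1 - b) • x + b • y - p = (1 - b) • (x - p) + b • (y - p) by module,
    show x - y = (x - p) - (y - p) by abel]
  generalize x - p = u, y - p = v
  rw [norm_add_sq_real, norm_sub_sq_real, norm_smul, norm_smul, real_inner_smul_left,
    real_inner_smul_right, mul_pow, mul_pow, Real.norm_eq_abs, Real.norm_eq_abs, sq_abs, sq_abs]
  ring

theorem strongConvexOn_conjugate_of_inner_sub_add_sq_le {f fstar : E → ℝ} {m : ℝ} (hm : 0 ≤ m)
    (p : E → E) (hfstar : ∀ y, IsLUB (range fun x => ⟪x, y⟫ - f x) (fstar y))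
    (hle : ∀ x y, ⟪x, y⟫ - f x + m / 2 * ‖y - p x‖ ^ 2 ≤ fstar y) :
    StrongConvexOn univ m fstar := by
  refine ⟨convex_univ, fun a _ b _ s t hs ht hst => (hfstar _).2 ?_⟩
  rintro _ ⟨x, rfl⟩
  have hsplit := mul_norm_sub_sq_add_mul_norm_sub_sq hst a b (p x)
  have ha := hle x a
  have hb := hle x b
  calc ⟪x, s • a + t • b⟫ - f x = s * (⟪x, a⟫ - f x) + t * (⟪x, b⟫ - f x) := by
        rw [inner_add_right, real_inner_smul_right, real_inner_smul_right]
        linear_combination f x * hst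
    _ ≤ s * (fstar a - m / 2 * ‖a - p x‖ ^ 2) + t * (fstar b - m / 2 * ‖b - p x‖ ^ 2) := by
        gcongr s * ?_ + t * ?_ <;> linarith
    _ = s • fstar a + t • fstar b - m / 2 * ‖s • a + t • b - p x‖ ^ 2
          - s * t * (m / 2 * ‖a - b‖ ^ 2) := by
        simp only [smul_eq_mul]
        linear_combination (-m / 2) * hsplit
    _ ≤ s • fstar a + t • fstar b - s * t * (m / 2 * ‖a - b‖ ^ 2) := by
        have : 0 ≤ m / 2 * ‖s • a + t • b - p x‖ ^ 2 := by positivity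
        linarith

section CompleteSpace

variable [CompleteSpace E]

theorem le_add_inner_gradient_add_sq_norm_sub {f : E → ℝ} {L : ℝ} (hdiff : Differentiable ℝ f)
    (hsmooth : ∀ x x', ‖gradient f x - gradient f x'‖ ≤ L * ‖x - x'‖) (x z : E) :
    f z ≤ f x + ⟪gradient f x, z - x⟫ + L / 2 * ‖z - x‖ ^ 2 := by
  set u := z - x
  have hφ (t : ℝ) : HasDerivAt (fun t : ℝ => f (x + t • u)) ⟪gradient f (x + t • u), u⟫ t := by
    have hline : HasDerivAt (fun t : ℝ => x + t • u) u t := by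
      simpa using ((hasDerivAt_id t).smul_const u).const_add x
    simpa [Function.comp_def] using (hdiff _).hasGradientAt.hasFDerivAt.comp_hasDerivAt t hline
  have hB (t : ℝ) : HasDerivAt (fun t : ℝ => f x + t * ⟪gradient f x, u⟫ + L / 2 * ‖u‖ ^ 2 * t ^ 2)
      (⟪gradient f x, u⟫ + L * ‖u‖ ^ 2 * t) t := by
    refine ((((hasDerivAt_id t).mul_const _).const_add (f x)).add
      ((hasDerivAt_pow 2 t).const_mul (L / 2 * ‖u‖ ^ 2))).congr_deriv ?_
    ring
  have hslope : ∀ t ∈ Ico (0 : ℝ) 1,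
      ⟪gradient f (x + t • u), u⟫ ≤ ⟪gradient f x, u⟫ + L * ‖u‖ ^ 2 * t := by
    intro t ht
    calc ⟪gradient f (x + t • u), u⟫
        = ⟪gradient f x, u⟫ + ⟪gradient f (x + t • u) - gradient f x, u⟫ := by
          rw [inner_sub_left]; ring
      _ ≤ ⟪gradient f x, u⟫ + L * ‖t • u‖ * ‖u‖ := by
          gcongr
          refine (real_inner_le_norm _ _).trans (mul_le_mul_of_nonneg_right ?_ (norm_nonneg u))
          simpa using hsmooth (x + t • u) x
      _ = ⟪gradient f x, u⟫ + L * ‖u‖ ^ 2 * t := by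
          rw [norm_smul, Real.norm_of_nonneg ht.1]; ring
  have := image_le_of_deriv_right_le_deriv_boundary
    (fun t _ => (hφ t).continuousAt.continuousWithinAt) (fun t _ => (hφ t).hasDerivWithinAt)
    (by simp) (fun t _ => (hB t).continuousAt.continuousWithinAt)
    (fun t _ => (hB t).hasDerivWithinAt) hslope (right_mem_Icc.2 zero_le_one)
  simpa [u] using this

theorem exists_inner_sub_add_sq_norm_sub_gradient_le {f : E → ℝ} {L : ℝ}
    (hdiff : Differentiable ℝ f)
    (hsmooth : ∀ x x', ‖gradient f x - gradient f x'‖ ≤ L * ‖x - x'‖) (x y : E) :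
    ∃ z, ⟪x, y⟫ - f x + 1 / L / 2 * ‖y - gradient f x‖ ^ 2 ≤ ⟪z, y⟫ - f z := by
  set w := y - gradient f x
  refine ⟨x + (1 / L) • w, ?_⟩
  have hdesc := le_add_inner_gradient_add_sq_norm_sub hdiff hsmooth x (x + (1 / L) • w)
  have hw : ⟪w, y⟫ - ⟪gradient f x, w⟫ = ‖w‖ ^ 2 := by
    rw [real_inner_comm, ← inner_sub_left, real_inner_self_eq_norm_sq]
  have hL : L * (1 / L) ^ 2 = 1 / L := by field_simp
  rw [add_sub_cancel_left, real_inner_smul_right, norm_smul, mul_pow, Real.norm_eq_abs, sq_abs]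
    at hdesc
  rw [inner_add_left, real_inner_smul_left]
  linear_combination hdesc - (1 / L) * hw + ‖w‖ ^ 2 / 2 * hL

end CompleteSpace

theorem smooth_convex_conjugate_strongly_convex_general
    (n : ℕ) (f : EuclideanSpace ℝ (Fin n) → ℝ) (L : ℝ) (hL : 0 < L)
    (hdiff : Differentiable ℝ f)
    (hsmooth : ∀ x x', ‖gradient f x - gradient f x'‖ ≤ L * ‖x - x'‖)
    (fstar : EuclideanSpace ℝ (Fin n) → ℝ)
    (hfstar : ∀ y, IsLUB (Set.range fun x => ⟪x, y⟫ - f x) (fstar y)) :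
    ConvexOn ℝ Set.univ (fun y => fstar y - 1 / L / 2 * ‖y‖ ^ 2) := by
  have hle (x y) : ⟪x, y⟫ - f x + 1 / L / 2 * ‖y - gradient f x‖ ^ 2 ≤ fstar y := by
    obtain ⟨z, hz⟩ := exists_inner_sub_add_sq_norm_sub_gradient_le hdiff hsmooth x y
    exact hz.trans ((hfstar y).1 ⟨z, rfl⟩)
  exact strongConvexOn_iff_convex.1
    (strongConvexOn_conjugate_of_inner_sub_add_sq_le (by positivity) (gradient f) hfstar hle)

/-- If `f : ℝ^n → ℝ` is `L`-smooth and convex, then its convex conjugate `f*`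
is `(1/L)`-strongly convex. -/
theorem smooth_convex_conjugate_strongly_convex
    (n : ℕ) (f : EuclideanSpace ℝ (Fin n) → ℝ) (L : ℝ) (hL : 0 < L)
    (hconv : ConvexOn ℝ Set.univ f)
    (hdiff : Differentiable ℝ f)
    (hsmooth : ∀ x x', ‖gradient f x - gradient f x'‖ ≤ L * ‖x - x'‖)
    (fstar : EuclideanSpace ℝ (Fin n) → ℝ)
    (hfstar : ∀ y, IsLUB (Set.range fun x => ⟪x, y⟫ - f x) (fstar y)) :
    ConvexOn ℝ Set.univ (fun y => fstar y - 1 / L / 2 * ‖y‖ ^ 2) :=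
  smooth_convex_conjugate_strongly_convex_general n f L hL hdiff hsmooth fstar hfstar
end

section
/- Suppose f : ℝ^n → ℝ is differentiable, L_f-smooth and μ_f-strongly convex, A ∈ ℝ^{m×n} has minimum singular value σ_min > 0, and h : ℝ^m → ℝ ∪ {+∞} is proper closed convex. Then the dual function Φ(λ) := -f*(-Aᵀλ) - ⟨b,λ⟩ - h*(λ) is (σ_min²/L_f)-strongly concave. -/
/-!
The descent lemma bounds `f` above by a quadratic around every `x`; taking `x + (y - ∇f x) / L`
as a competitor in the supremum shows `f* y ≥ ⟪x, y⟫ - f x + ‖y - ∇f x‖² / (2L)`. Each right-hand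
side is `1/L`-strongly convex in `y` and their supremum over `x` is `f*`, so `f*` is
`1/L`-strongly convex. Composing with `-Aᵀ` multiplies the modulus
by `σ_min²`. Finally `-h*` is an infimum of the affine functions `λ ↦ h z - ⟪z, λ⟫`, so `Φ` is an
infimum over `z` of `(σ_min²/L)`-strongly concave functions, which stays strongly concave even
with extended-real values.
-/

open RealInnerProductSpace Set

section Smooth

variable {E : Type*} [NormedAddCommGroup E] [InnerProductSpace ℝ E]

lemma mul_norm_sq_add_mul_norm_sq {a b : ℝ} (hab : a + b = 1) (u v : E) :
    a * ‖u‖ ^ 2 + b * ‖v‖ ^ 2 = ‖a • u + b • v‖ ^ 2 + a * b * ‖u - v‖ ^ 2 := by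
  rw [norm_add_sq_real, norm_sub_sq_real, norm_smul, norm_smul, real_inner_smul_left,
    real_inner_smul_right, mul_pow, mul_pow, Real.norm_eq_abs, Real.norm_eq_abs, sq_abs, sq_abs]
  obtain rfl := eq_sub_of_add_eq hab
  ring

variable [CompleteSpace E] {f : E → ℝ} {L : ℝ}

lemma apply_add_le_of_lipschitz_gradient (hf : Differentiable ℝ f)
    (hL : ∀ x x', ‖gradient f x - gradient f x'‖ ≤ L * ‖x - x'‖) (x d : E) :
    f (x + d) ≤ f x + ⟪gradient f x, d⟫ + L / 2 * ‖d‖ ^ 2 := by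
  set φ : ℝ → ℝ := fun t => f (x + t • d) - t * ⟪gradient f x, d⟫
  have hφ : ∀ t, HasDerivAt φ (⟪gradient f (x + t • d), d⟫ - ⟪gradient f x, d⟫) t := by
    intro t
    have hline : HasDerivAt (fun t : ℝ => x + t • d) d t := by
      simpa using ((hasDerivAt_id t).smul_const d).const_add x
    have hcomp : HasDerivAt (fun t => f (x + t • d)) ⟪gradient f (x + t • d), d⟫ t := by
      have := (hf _).hasGradientAt.hasFDerivAt.comp_hasDerivAt t hline
      rwa [InnerProductSpace.toDual_apply_apply] at this
    exact hcomp.sub (hasDerivAt_mul_const _)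
  have hB : ∀ t, HasDerivAt (fun t => φ 0 + L / 2 * ‖d‖ ^ 2 * t ^ 2) (L * ‖d‖ ^ 2 * t) t :=
    fun t => (((hasDerivAt_pow 2 t).const_mul _).const_add _).congr_deriv (by norm_num; ring)
  have hbound : ∀ t ∈ Ico (0 : ℝ) 1,
      ⟪gradient f (x + t • d), d⟫ - ⟪gradient f x, d⟫ ≤ L * ‖d‖ ^ 2 * t := by
    rintro t ⟨ht, -⟩
    calc ⟪gradient f (x + t • d), d⟫ - ⟪gradient f x, d⟫
        = ⟪gradient f (x + t • d) - gradient f x, d⟫ := (inner_sub_left _ _ _).symm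
      _ ≤ ‖gradient f (x + t • d) - gradient f x‖ * ‖d‖ := real_inner_le_norm _ _
      _ ≤ L * ‖t • d‖ * ‖d‖ := by gcongr; simpa using hL (x + t • d) x
      _ = L * ‖d‖ ^ 2 * t := by rw [norm_smul, Real.norm_of_nonneg ht]; ring
  have hφB := image_le_of_deriv_right_le_deriv_boundary
    (fun t _ => (hφ t).continuousAt.continuousWithinAt) (fun t _ => (hφ t).hasDerivWithinAt)
    (by simp) (fun t _ => (hB t).continuousAt.continuousWithinAt)
    (fun t _ => (hB t).hasDerivWithinAt) hbound (right_mem_Icc.2 zero_le_one)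
  simp only [φ, one_smul, zero_smul, add_zero, one_mul, zero_mul, sub_zero, one_pow,
    mul_one] at hφB
  linarith

lemma inner_sub_add_norm_sq_le_of_lipschitz_gradient (hL₀ : 0 < L) (hf : Differentiable ℝ f)
    (hL : ∀ x x', ‖gradient f x - gradient f x'‖ ≤ L * ‖x - x'‖) (x y : E) :
    ⟪x, y⟫ - f x + (2 * L)⁻¹ * ‖y - gradient f x‖ ^ 2 ≤
      ⟪x + L⁻¹ • (y - gradient f x), y⟫ - f (x + L⁻¹ • (y - gradient f x)) := by
  have hdescent := apply_add_le_of_lipschitz_gradient hf hL x (L⁻¹ • (y - gradient f x))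
  set g := gradient f x
  have hinner : ⟪x + L⁻¹ • (y - g), y⟫ - ⟪g, L⁻¹ • (y - g)⟫ = ⟪x, y⟫ + L⁻¹ * ‖y - g‖ ^ 2 := by
    rw [real_inner_comm (L⁻¹ • (y - g)) g, inner_add_left, real_inner_smul_left,
      real_inner_smul_left, add_sub_assoc, ← mul_sub, ← inner_sub_right,
      real_inner_self_eq_norm_sq]
  have hnorm : ‖L⁻¹ • (y - g)‖ ^ 2 = L⁻¹ ^ 2 * ‖y - g‖ ^ 2 := by
    rw [norm_smul, mul_pow, Real.norm_of_nonneg (inv_nonneg.2 hL₀.le)]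
  have hcoeff : L⁻¹ - L / 2 * L⁻¹ ^ 2 = (2 * L)⁻¹ := by field_simp; ring
  nlinarith

theorem strongConvexOn_conjugate_of_lipschitz_gradient (hL₀ : 0 < L) (hf : Differentiable ℝ f)
    (hL : ∀ x x', ‖gradient f x - gradient f x'‖ ≤ L * ‖x - x'‖) {fstar : E → ℝ}
    (hfstar : ∀ y, IsLUB (range fun x => ⟪x, y⟫ - f x) (fstar y)) :
    StrongConvexOn univ L⁻¹ fstar := by
  refine ⟨convex_univ, fun y₁ _ y₂ _ a b ha hb hab => (hfstar _).2 ?_⟩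
  rintro _ ⟨x, rfl⟩
  set g := gradient f x
  have hle : ∀ y, ⟪x, y⟫ - f x + (2 * L)⁻¹ * ‖y - g‖ ^ 2 ≤ fstar y := fun y =>
    (inner_sub_add_norm_sq_le_of_lipschitz_gradient hL₀ hf hL x y).trans ((hfstar y).1 ⟨_, rfl⟩)
  have hsplit := mul_norm_sq_add_mul_norm_sq hab (y₁ - g) (y₂ - g)
  have hcomb : a • (y₁ - g) + b • (y₂ - g) = a • y₁ + b • y₂ - g := by
    have : a • (y₁ - g) + b • (y₂ - g) = a • y₁ + b • y₂ - (a + b) • g := by module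
    rwa [hab, one_smul] at this
  rw [hcomb, sub_sub_sub_cancel_right] at hsplit
  have hinner : ⟪x, a • y₁ + b • y₂⟫ = a * ⟪x, y₁⟫ + b * ⟪x, y₂⟫ := by
    rw [inner_add_right, real_inner_smul_right, real_inner_smul_right]
  have h₁ := mul_le_mul_of_nonneg_left (hle y₁) ha
  have h₂ := mul_le_mul_of_nonneg_left (hle y₂) hb
  have hnonneg : 0 ≤ (2 * L)⁻¹ * ‖a • y₁ + b • y₂ - g‖ ^ 2 := by positivity
  have hfx : a * f x + b * f x = f x := by rw [← add_mul, hab, one_mul]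
  have hscaled := congrArg ((2 * L)⁻¹ * ·) hsplit
  simp only [smul_eq_mul, hinner]
  linear_combination h₁ + h₂ + hnonneg - hscaled + hfx

end Smooth

section StrongConvexity

variable {E F : Type*} [NormedAddCommGroup E] [InnerProductSpace ℝ E]
  [NormedAddCommGroup F] [InnerProductSpace ℝ F] {m σ : ℝ}

lemma StrongConvexOn.comp_linearMap {g : F → ℝ} (hg : StrongConvexOn univ m g) (hm : 0 ≤ m)
    (T : E →ₗ[ℝ] F) (hσ : 0 ≤ σ) (hT : ∀ x, σ * ‖x‖ ≤ ‖T x‖) :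
    StrongConvexOn univ (σ ^ 2 * m) (g ∘ T) := by
  refine ⟨convex_univ, fun x _ y _ a b ha hb hab => ?_⟩
  have hgT := hg.2 (mem_univ (T x)) (mem_univ (T y)) ha hb hab
  have hTsub : σ ^ 2 * ‖x - y‖ ^ 2 ≤ ‖T x - T y‖ ^ 2 := by
    rw [← map_sub, ← mul_pow]
    gcongr
    exact hT _
  have hab₀ : 0 ≤ a * b * (m / 2) := by positivity
  simp only [Function.comp_apply, map_add, map_smul]
  nlinarith [mul_le_mul_of_nonneg_left hTsub hab₀]

lemma StrongConcaveOn.sub_inner {g : E → ℝ} (hg : StrongConcaveOn univ m g) (w : E) :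
    StrongConcaveOn univ m fun x => g x - ⟪w, x⟫ := by
  refine ⟨convex_univ, fun x _ y _ a b ha hb hab => ?_⟩
  have := hg.2 (mem_univ x) (mem_univ y) ha hb hab
  simp only [smul_eq_mul, inner_add_right, real_inner_smul_right] at this ⊢
  linarith

end StrongConvexity

namespace EReal

lemma coe_sub_iSup {ι : Sort*} (r : ℝ) (u : ι → EReal) :
    (r : EReal) - ⨆ i, u i = ⨅ i, ((r : EReal) - u i) := by
  have hswap : ∀ X s : EReal, X ≤ r - s ↔ s ≤ r - X := fun X s => by
    rw [le_sub_iff_add_le (.inr (coe_ne_bot r)) (.inr (coe_ne_top r)), add_comm,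
      ← le_sub_iff_add_le (.inr (coe_ne_bot r)) (.inr (coe_ne_top r))]
  refine eq_of_forall_le_iff fun X => ?_
  simp only [le_iInf_iff, hswap X, iSup_le_iff]

lemma coe_sub_sub_eq_coe_add (r s : ℝ) (t : EReal) :
    (r : EReal) - ((s : EReal) - t) = ((r - s : ℝ) : EReal) + t := by
  induction t using EReal.rec with
  | bot => simp
  | top => simp [-EReal.coe_sub]
  | coe t => norm_cast; ring

end EReal

section ERealValued

variable {E : Type*} [NormedAddCommGroup E] [NormedSpace ℝ E] {m : ℝ}

/-- `StrongConcaveOn univ m` for extended-real-valued functions. -/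
def StrongConcaveEReal (m : ℝ) (Φ : E → EReal) : Prop :=
  ∀ x y (a b : ℝ), 0 ≤ a → 0 ≤ b → a + b = 1 →
    (a : EReal) * Φ x + (b : EReal) * Φ y + ((m / 2 * (a * b) * ‖x - y‖ ^ 2 : ℝ) : EReal)
      ≤ Φ (a • x + b • y)

lemma StrongConcaveOn.strongConcaveEReal_coe_add {g : E → ℝ} (hg : StrongConcaveOn univ m g)
    (t : EReal) : StrongConcaveEReal m fun x => (g x : EReal) + t := by
  intro x y a b ha hb hab
  have hreal := hg.2 (mem_univ x) (mem_univ y) ha hb hab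
  induction t using EReal.rec with
  | bot =>
    rcases ha.eq_or_lt with rfl | ha₀
    · simp [show b = 1 by linarith]
    · simp [EReal.coe_mul_bot_of_pos ha₀]
  | top => simp
  | coe t =>
    dsimp only
    norm_cast
    simp only [smul_eq_mul] at hreal
    linear_combination hreal + t * hab

lemma StrongConcaveEReal.iInf {ι : Sort*} {Φ : ι → E → EReal}
    (hΦ : ∀ i, StrongConcaveEReal m (Φ i)) : StrongConcaveEReal m fun x => ⨅ i, Φ i x := by
  intro x y a b ha hb hab
  refine le_iInf fun i => le_trans ?_ (hΦ i x y a b ha hb hab)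
  exact add_le_add_left (add_le_add
    (mul_le_mul_of_nonneg_left (iInf_le (Φ · x) i) (EReal.coe_nonneg.2 ha))
    (mul_le_mul_of_nonneg_left (iInf_le (Φ · y) i) (EReal.coe_nonneg.2 hb))) _

end ERealValued

theorem dual_strongly_concave_general
    (n m : ℕ) (f : EuclideanSpace ℝ (Fin n) → ℝ) (Lf : ℝ)
    (hLf : 0 < Lf)
    (hdiff : Differentiable ℝ f)
    (hsmooth : ∀ x x', ‖gradient f x - gradient f x'‖ ≤ Lf * ‖x - x'‖)
    (A : EuclideanSpace ℝ (Fin n) →ₗ[ℝ] EuclideanSpace ℝ (Fin m))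
    (b : EuclideanSpace ℝ (Fin m))
    (σmin : ℝ) (hσ : 0 < σmin)
    (hA : ∀ lam : EuclideanSpace ℝ (Fin m), σmin * ‖lam‖ ≤ ‖LinearMap.adjoint A lam‖)
    (h : EuclideanSpace ℝ (Fin m) → EReal)
    (fstar : EuclideanSpace ℝ (Fin n) → ℝ)
    (hfstar : ∀ y, IsLUB (Set.range fun x => ⟪x, y⟫ - f x) (fstar y))
    (hstar : EuclideanSpace ℝ (Fin m) → EReal)
    (hhstar : ∀ y, hstar y = ⨆ z, ((⟪z, y⟫ : ℝ) : EReal) - h z)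
    (Φ : EuclideanSpace ℝ (Fin m) → EReal)
    (hΦ : ∀ lam, Φ lam =
      ((-(fstar (-(LinearMap.adjoint A lam))) - ⟪b, lam⟫ : ℝ) : EReal) - hstar lam) :
    ∀ lam lam' (a c : ℝ), 0 ≤ a → 0 ≤ c → a + c = 1 →
      (a : EReal) * Φ lam + (c : EReal) * Φ lam' +
          ((σmin ^ 2 / Lf / 2 * (a * c) * ‖lam - lam'‖ ^ 2 : ℝ) : EReal)
        ≤ Φ (a • lam + c • lam') := by
  have hconj := strongConvexOn_conjugate_of_lipschitz_gradient hLf hdiff hsmooth hfstar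
  have hdual : StrongConcaveOn univ (σmin ^ 2 / Lf)
      fun lam => -fstar (-(LinearMap.adjoint A lam)) - ⟪b, lam⟫ := by
    have hcomp := hconj.comp_linearMap (inv_nonneg.2 hLf.le) (-LinearMap.adjoint A) hσ.le
      fun lam => by simpa using hA lam
    rw [div_eq_mul_inv]
    exact StrongConcaveOn.sub_inner hcomp.neg b
  have hΦ_iInf : Φ = fun lam => ⨅ z,
      ((-fstar (-(LinearMap.adjoint A lam)) - ⟪b, lam⟫ - ⟪z, lam⟫ : ℝ) : EReal) + h z := by
    funext lam
    simp only [hΦ, hhstar, EReal.coe_sub_iSup, EReal.coe_sub_sub_eq_coe_add]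
  rw [hΦ_iInf]
  exact StrongConcaveEReal.iInf fun z => (hdual.sub_inner z).strongConcaveEReal_coe_add (h z)

/-- If `f : ℝ^n → ℝ` is differentiable, `L_f`-smooth and `μ_f`-strongly convex, `A` has
minimum singular value `σ_min > 0` (i.e. `σ_min‖λ‖ ≤ ‖Aᵀλ‖` for all `λ`), and
`h : ℝ^m → ℝ ∪ {+∞}` is proper closed convex, then the dual function
`Φ(λ) := -f*(-Aᵀλ) - ⟨b,λ⟩ - h*(λ)` is `(σ_min²/L_f)`-strongly concave. -/
theorem dual_strongly_concave
    (n m : ℕ) (f : EuclideanSpace ℝ (Fin n) → ℝ) (Lf μf : ℝ)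
    (hLf : 0 < Lf) (hμf : 0 < μf)
    (hdiff : Differentiable ℝ f)
    (hsmooth : ∀ x x', ‖gradient f x - gradient f x'‖ ≤ Lf * ‖x - x'‖)
    (hsc : ConvexOn ℝ Set.univ (fun x => f x - μf / 2 * ‖x‖ ^ 2))
    (A : EuclideanSpace ℝ (Fin n) →ₗ[ℝ] EuclideanSpace ℝ (Fin m))
    (b : EuclideanSpace ℝ (Fin m))
    (σmin : ℝ) (hσ : 0 < σmin)
    (hA : ∀ lam : EuclideanSpace ℝ (Fin m), σmin * ‖lam‖ ≤ ‖LinearMap.adjoint A lam‖)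
    (h : EuclideanSpace ℝ (Fin m) → EReal)
    (hproper₁ : ∀ z, h z ≠ ⊥) (hproper₂ : ∃ z, h z ≠ ⊤)
    (hclosed : LowerSemicontinuous h)
    (hconvex : ∀ z z' (a c : ℝ), 0 ≤ a → 0 ≤ c → a + c = 1 →
      h (a • z + c • z') ≤ (a : EReal) * h z + (c : EReal) * h z')
    (fstar : EuclideanSpace ℝ (Fin n) → ℝ)
    (hfstar : ∀ y, IsLUB (Set.range fun x => ⟪x, y⟫ - f x) (fstar y))
    (hstar : EuclideanSpace ℝ (Fin m) → EReal)
    (hhstar : ∀ y, hstar y = ⨆ z, ((⟪z, y⟫ : ℝ) : EReal) - h z)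
    (Φ : EuclideanSpace ℝ (Fin m) → EReal)
    (hΦ : ∀ lam, Φ lam =
      ((-(fstar (-(LinearMap.adjoint A lam))) - ⟪b, lam⟫ : ℝ) : EReal) - hstar lam) :
    ∀ lam lam' (a c : ℝ), 0 ≤ a → 0 ≤ c → a + c = 1 →
      (a : EReal) * Φ lam + (c : EReal) * Φ lam' +
          ((σmin ^ 2 / Lf / 2 * (a * c) * ‖lam - lam'‖ ^ 2 : ℝ) : EReal)
        ≤ Φ (a • lam + c • lam') :=
  dual_strongly_concave_general n m f Lf hLf hdiff hsmooth A b σmin hσ hA h fstar hfstar hstar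
    hhstar Φ hΦ
end

section
/- Suppose f : ℝ^n → ℝ is L_f-smooth and μ_f-strongly convex with conjugate f*, and A ∈ ℝ^{m×n} has minimum nonzero singular value σ̲_min > 0. Then Φ(λ) := -⟨b,λ⟩ - f*(-Aᵀλ) is strongly concave with modulus σ̲_min²/L_f when restricted to the range of A: for all λ, λ' ∈ Range(A), Φ(λ') ≤ Φ(λ) + ⟨∇Φ(λ), λ'-λ⟩ - (σ̲_min²/(2L_f))‖λ - λ'‖². -/
/-!
Put `u = -Aᵀλ`. By strong convexity of `f` the supremum defining `f*(u)` is attained at some `x`,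
so `∇f x = u` and `f*(u) = ⟪x, u⟫ - f x`; comparing with the quadratic upper bound
`f*(u') ≤ f*(u) + ⟪x, u' - u⟫ + ‖u' - u‖² / (2μ)` shows `∇f*(u) = x`, hence `∇Φ(λ) = -b + A x`.
Conversely, testing the supremum defining `f*(u')` at `x + (u' - u) / L` and using the descent
lemma for the `L`-smooth `f` gives `f*(u') ≥ f*(u) + ⟪x, u' - u⟫ + ‖u' - u‖² / (2L)`. With
`u' = -Aᵀλ'` this is the claimed inequality with `‖Aᵀ(λ - λ')‖²` in place of `σ̲²‖λ - λ'‖²`.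
-/

open RealInnerProductSpace Set Filter

lemma ConvexOn.add_le_of_hasFDerivAt {E : Type*} [NormedAddCommGroup E] [NormedSpace ℝ E]
    {g : E → ℝ} {g' : E →L[ℝ] ℝ} {x : E} (hg : ConvexOn ℝ univ g) (hd : HasFDerivAt g g' x)
    (y : E) : g x + g' (y - x) ≤ g y := by
  have hline : ConvexOn ℝ univ (g ∘ AffineMap.lineMap (k := ℝ) x y) := by
    simpa using hg.comp_affineMap (AffineMap.lineMap x y)
  have hderiv : HasDerivAt (g ∘ AffineMap.lineMap (k := ℝ) x y) (g' (y - x)) 0 :=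
    hd.comp_hasDerivAt_of_eq 0 AffineMap.hasDerivAt_lineMap (by simp)
  have := hline.le_slope_of_hasDerivAt (mem_univ 0) (mem_univ 1) one_pos hderiv
  simp only [map_sub, slope_def_field, Function.comp_apply, AffineMap.lineMap_apply_one,
    AffineMap.lineMap_apply_zero, sub_zero, div_one, tsub_le_iff_right] at this
  rw [map_sub]
  linarith

section InnerProductSpace

variable {E : Type*} [NormedAddCommGroup E] [InnerProductSpace ℝ E]

lemma real_inner_le_half_mul_norm_sq_add {μ : ℝ} (hμ : 0 < μ) (a b : E) :
    ⟪a, b⟫ ≤ μ / 2 * ‖a‖ ^ 2 + 1 / (2 * μ) * ‖b‖ ^ 2 := by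
  have h := norm_sub_sq_real (μ • a) b
  rw [norm_smul, real_inner_smul_left, Real.norm_of_nonneg hμ.le] at h
  have h0 : 0 ≤ ‖μ • a - b‖ ^ 2 := sq_nonneg _
  field_simp
  nlinarith

def IsFenchelConjugate (f fstar : E → ℝ) : Prop :=
  ∀ y, IsLUB (range fun x => ⟪x, y⟫ - f x) (fstar y)

lemma IsFenchelConjugate.add_inner_le {f fstar : E → ℝ} (hfstar : IsFenchelConjugate f fstar)
    {x u : E} (hval : fstar u = ⟪x, u⟫ - f x) (u' : E) : fstar u + ⟪x, u' - u⟫ ≤ fstar u' := by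
  have := (hfstar u').1 ⟨x, rfl⟩
  rw [hval, inner_sub_right]
  dsimp only at this
  linarith

variable [CompleteSpace E]

lemma hasGradientAt_of_abs_sub_inner_le_sq {g : E → ℝ} {a x : E} {C : ℝ}
    (h : ∀ y, |g y - g x - ⟪a, y - x⟫| ≤ C * ‖y - x‖ ^ 2) : HasGradientAt g a x := by
  rw [hasGradientAt_iff_isLittleO]
  refine Asymptotics.IsBigO.trans_isLittleO (g := fun y => ‖y - x‖ ^ 2) ?_ ?_
  · exact Asymptotics.IsBigO.of_bound C (Eventually.of_forall fun y => by simpa using h y)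
  · exact (Asymptotics.isLittleO_norm_pow_id one_lt_two).comp_tendsto
      (tendsto_sub_nhds_zero_iff.2 tendsto_id)

lemma DifferentiableAt.hasDerivAt_comp_add_smul {g : E → ℝ} {x v : E} {t : ℝ}
    (hd : DifferentiableAt ℝ g (x + t • v)) :
    HasDerivAt (fun s : ℝ => g (x + s • v)) ⟪gradient g (x + t • v), v⟫ t := by
  have hline : HasDerivAt (fun s : ℝ => x + s • v) v t := by
    simpa using ((hasDerivAt_id t).smul_const v).const_add x
  exact hd.hasGradientAt.hasFDerivAt.comp_hasDerivAt t hline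

lemma le_add_inner_gradient_add_sq_of_lipschitz_gradient {g : E → ℝ} {L : ℝ}
    (hd : Differentiable ℝ g) (hL : ∀ x x', ‖gradient g x - gradient g x'‖ ≤ L * ‖x - x'‖)
    (x y : E) : g y ≤ g x + ⟪gradient g x, y - x⟫ + L / 2 * ‖y - x‖ ^ 2 := by
  set v := y - x
  have hφ (t : ℝ) : HasDerivAt (fun s : ℝ => g (x + s • v) - s * ⟪gradient g x, v⟫)
      (⟪gradient g (x + t • v), v⟫ - ⟪gradient g x, v⟫) t :=
    (hd _).hasDerivAt_comp_add_smul.sub (hasDerivAt_mul_const _)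
  have hB (t : ℝ) :
      HasDerivAt (fun s : ℝ => g x + L / 2 * s ^ 2 * ‖v‖ ^ 2) (L * t * ‖v‖ ^ 2) t := by
    refine ((((hasDerivAt_pow 2 t).const_mul (L / 2)).mul_const (‖v‖ ^ 2)).const_add
      (g x)).congr_deriv ?_
    ring
  have hbound : ∀ t ∈ Ico (0 : ℝ) 1,
      ⟪gradient g (x + t • v), v⟫ - ⟪gradient g x, v⟫ ≤ L * t * ‖v‖ ^ 2 := by
    intro t ht
    have hlip : ‖gradient g (x + t • v) - gradient g x‖ ≤ L * (t * ‖v‖) := by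
      simpa [norm_smul, abs_of_nonneg ht.1] using hL (x + t • v) x
    calc ⟪gradient g (x + t • v), v⟫ - ⟪gradient g x, v⟫
        = ⟪gradient g (x + t • v) - gradient g x, v⟫ := (inner_sub_left _ _ _).symm
      _ ≤ ‖gradient g (x + t • v) - gradient g x‖ * ‖v‖ := real_inner_le_norm _ _
      _ ≤ L * (t * ‖v‖) * ‖v‖ := by gcongr
      _ = L * t * ‖v‖ ^ 2 := by ring
  have := image_le_of_deriv_right_le_deriv_boundary
    (fun t _ => (hφ t).continuousAt.continuousWithinAt) (fun t _ => (hφ t).hasDerivWithinAt)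
    (by simp) (fun t _ => (hB t).continuousAt.continuousWithinAt)
    (fun t _ => (hB t).hasDerivWithinAt) hbound (right_mem_Icc.2 zero_le_one)
  simp only [one_smul, one_mul, one_pow, mul_one, v, add_sub_cancel] at this
  linarith

namespace StrongConvexOn

variable {f : E → ℝ} {μ : ℝ}

lemma add_inner_gradient_add_sq_le (hf : StrongConvexOn univ μ f) {x : E}
    (hd : DifferentiableAt ℝ f x) (y : E) :
    f x + ⟪gradient f x, y - x⟫ + μ / 2 * ‖y - x‖ ^ 2 ≤ f y := by
  have hderiv := hd.hasGradientAt.hasFDerivAt.sub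
    ((hasStrictFDerivAt_norm_sq x).hasFDerivAt.const_mul (μ / 2))
  have := (strongConvexOn_iff_convex.mp hf).add_le_of_hasFDerivAt hderiv y
  have hsq : ‖y‖ ^ 2 = ‖x‖ ^ 2 + 2 * ⟪x, y - x⟫ + ‖y - x‖ ^ 2 := by
    simpa using norm_add_sq_real x (y - x)
  simp only [sub_apply, smul_apply, InnerProductSpace.toDual_apply_apply, innerSL_apply_apply,
    smul_eq_mul, nsmul_eq_mul, Nat.cast_ofNat, hsq] at this
  linarith

lemma exists_forall_inner_sub_le [ProperSpace E] (hf : StrongConvexOn univ μ f) (hμ : 0 < μ)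
    (hd : Differentiable ℝ f) (u : E) : ∃ x, ∀ z, ⟪z, u⟫ - f z ≤ ⟪x, u⟫ - f x := by
  set c := ‖gradient f 0 - u‖
  refine ((continuous_id.inner continuous_const).sub hd.continuous).exists_forall_ge' 0 ?_
  filter_upwards [tendsto_norm_cocompact_atTop.eventually_ge_atTop (2 * c / μ)] with z hz
  have hlower := hf.add_inner_gradient_add_sq_le (hd 0) z
  have hcs : -(c * ‖z‖) ≤ ⟪gradient f 0 - u, z⟫ := by
    simpa using neg_le_of_abs_le (abs_real_inner_le_norm (gradient f 0 - u) z)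
  have hcz : c * ‖z‖ ≤ μ / 2 * ‖z‖ ^ 2 := by
    have := mul_le_mul_of_nonneg_left hz (by positivity : 0 ≤ μ / 2 * ‖z‖)
    field_simp at this
    nlinarith
  simp only [sub_zero, inner_sub_left] at hlower hcs
  simp only [Pi.sub_apply, id, inner_zero_left]
  rw [real_inner_comm u z]
  linarith

end StrongConvexOn

lemma gradient_eq_of_forall_inner_sub_le {f : E → ℝ} {x u : E} (hd : DifferentiableAt ℝ f x)
    (hmax : ∀ z, ⟪z, u⟫ - f z ≤ ⟪x, u⟫ - f x) : gradient f x = u := by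
  have hmin : IsLocalMin (fun z => f z - ⟪u, z⟫) x :=
    Eventually.of_forall fun z => by
      have := hmax z
      rw [real_inner_comm u z, real_inner_comm u x] at this
      dsimp only
      linarith
  have hzero := hmin.hasFDerivAt_eq_zero (hd.hasFDerivAt.sub (innerSL ℝ u).hasFDerivAt)
  refine ext_inner_right ℝ fun v => ?_
  have := congr($hzero v)
  simp only [sub_apply, innerSL_apply_apply, zero_apply, sub_eq_zero] at this
  rwa [← hd.hasGradientAt.fderiv_apply (𝕜 := ℝ)]

namespace IsFenchelConjugate

variable {f fstar : E → ℝ}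

lemma exists_gradient_eq_and_eq [ProperSpace E] {μ : ℝ} (hfstar : IsFenchelConjugate f fstar)
    (hf : StrongConvexOn univ μ f) (hμ : 0 < μ) (hd : Differentiable ℝ f) (u : E) :
    ∃ x, gradient f x = u ∧ fstar u = ⟪x, u⟫ - f x := by
  obtain ⟨x, hmax⟩ := hf.exists_forall_inner_sub_le hμ hd u
  refine ⟨x, gradient_eq_of_forall_inner_sub_le (hd x) hmax, (hfstar u).unique ?_⟩
  exact IsGreatest.isLUB ⟨⟨x, rfl⟩, by rintro _ ⟨z, rfl⟩; exact hmax z⟩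

lemma le_add_inner_add_sq {μ : ℝ} (hfstar : IsFenchelConjugate f fstar)
    (hf : StrongConvexOn univ μ f) (hμ : 0 < μ) {x u : E} (hd : DifferentiableAt ℝ f x)
    (hx : gradient f x = u) (hval : fstar u = ⟪x, u⟫ - f x) (u' : E) :
    fstar u' ≤ fstar u + ⟪x, u' - u⟫ + 1 / (2 * μ) * ‖u' - u‖ ^ 2 := by
  refine (hfstar u').2 ?_
  rintro _ ⟨z, rfl⟩
  have hlower := hf.add_inner_gradient_add_sq_le hd z
  have hamgm := real_inner_le_half_mul_norm_sq_add hμ (z - x) (u' - u)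
  have hsplit : ⟪z, u'⟫ = ⟪x, u⟫ + ⟪x, u' - u⟫ + ⟪z - x, u' - u⟫ + ⟪u, z - x⟫ := by
    simp only [inner_sub_left, inner_sub_right, real_inner_comm x u, real_inner_comm z u]
    ring
  rw [hx] at hlower
  rw [hval]
  dsimp only
  linarith

lemma hasGradientAt {μ : ℝ} (hfstar : IsFenchelConjugate f fstar)
    (hf : StrongConvexOn univ μ f) (hμ : 0 < μ) {x u : E} (hd : DifferentiableAt ℝ f x)
    (hx : gradient f x = u) (hval : fstar u = ⟪x, u⟫ - f x) : HasGradientAt fstar x u := by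
  refine hasGradientAt_of_abs_sub_inner_le_sq (C := 1 / (2 * μ)) fun u' => abs_le.2 ⟨?_, ?_⟩
  · have := hfstar.add_inner_le hval u'
    have : 0 ≤ 1 / (2 * μ) * ‖u' - u‖ ^ 2 := by positivity
    linarith
  · linarith [hfstar.le_add_inner_add_sq hf hμ hd hx hval u']

lemma add_inner_add_sq_le {L : ℝ} (hfstar : IsFenchelConjugate f fstar) (hL : 0 < L)
    (hd : Differentiable ℝ f) (hsmooth : ∀ x x', ‖gradient f x - gradient f x'‖ ≤ L * ‖x - x'‖)
    {x u : E} (hx : gradient f x = u) (hval : fstar u = ⟪x, u⟫ - f x) (u' : E) :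
    fstar u + ⟪x, u' - u⟫ + 1 / (2 * L) * ‖u' - u‖ ^ 2 ≤ fstar u' := by
  obtain ⟨w, rfl⟩ : ∃ w, u' = u + w := ⟨u' - u, by abel⟩
  have hsup := (hfstar (u + w)).1 ⟨x + L⁻¹ • w, rfl⟩
  have hupper := le_add_inner_gradient_add_sq_of_lipschitz_gradient hd hsmooth x (x + L⁻¹ • w)
  rw [hx] at hupper
  simp only [add_sub_cancel_left, inner_add_left, inner_add_right, real_inner_smul_left,
    real_inner_smul_right, norm_smul, Real.norm_of_nonneg (inv_nonneg.2 hL.le),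
    real_inner_self_eq_norm_sq, real_inner_comm w u] at hsup hupper ⊢
  rw [hval]
  have : L / 2 * (L⁻¹ * ‖w‖) ^ 2 = L⁻¹ * ‖w‖ ^ 2 - 1 / (2 * L) * ‖w‖ ^ 2 := by
    field_simp
    ring
  linarith

end IsFenchelConjugate

end InnerProductSpace

lemma HasGradientAt.neg_inner_sub_comp_neg_adjoint {E F : Type*} [NormedAddCommGroup E]
    [InnerProductSpace ℝ E] [FiniteDimensional ℝ E] [NormedAddCommGroup F]
    [InnerProductSpace ℝ F] [FiniteDimensional ℝ F] {g : E → ℝ} {x : E} (A : E →ₗ[ℝ] F) (b : F)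
    {lam : F} (hg : HasGradientAt g x (-(LinearMap.adjoint A lam))) :
    HasGradientAt (fun ν => -⟪b, ν⟫ - g (-(LinearMap.adjoint A ν))) (-b + A x) lam := by
  set T := LinearMap.toContinuousLinearMap (-(LinearMap.adjoint A))
  have hcomp := ((innerSL ℝ b).hasFDerivAt (x := lam)).neg.sub
    (hg.hasFDerivAt.comp lam T.hasFDerivAt)
  have hderiv : InnerProductSpace.toDual ℝ F (-b + A x)
      = -(innerSL ℝ b) - (InnerProductSpace.toDual ℝ E x).comp T := by
    ext v
    simp [T, LinearMap.adjoint_inner_right]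
  rw [hasGradientAt_iff_hasFDerivAt, hderiv]
  exact hcomp

/-- If `f : ℝ^n → ℝ` is `L_f`-smooth and `μ_f`-strongly convex with conjugate `f*`, and the
minimum nonzero singular value of `A` is at least `σ̲_min > 0` (i.e. `σ̲_min‖v‖ ≤ ‖Aᵀv‖`
for `v ∈ Range(A)`), then `Φ(λ) := -⟨b,λ⟩ - f*(-Aᵀλ)` is `(σ̲_min²/L_f)`-strongly concave
on the range of `A`. -/
theorem dual_strongly_concave_on_range
    (n m : ℕ) (f : EuclideanSpace ℝ (Fin n) → ℝ) (Lf μf : ℝ)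
    (hLf : 0 < Lf) (hμf : 0 < μf)
    (hdiff : Differentiable ℝ f)
    (hsmooth : ∀ x x', ‖gradient f x - gradient f x'‖ ≤ Lf * ‖x - x'‖)
    (hsc : ConvexOn ℝ Set.univ (fun x => f x - μf / 2 * ‖x‖ ^ 2))
    (A : EuclideanSpace ℝ (Fin n) →ₗ[ℝ] EuclideanSpace ℝ (Fin m))
    (b : EuclideanSpace ℝ (Fin m))
    (σmin : ℝ) (hσ : 0 < σmin)
    (hA : ∀ v ∈ LinearMap.range A, σmin * ‖v‖ ≤ ‖LinearMap.adjoint A v‖)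
    (fstar : EuclideanSpace ℝ (Fin n) → ℝ)
    (hfstar : ∀ y, IsLUB (Set.range fun x => ⟪x, y⟫ - f x) (fstar y))
    (Φ : EuclideanSpace ℝ (Fin m) → ℝ)
    (hΦ : ∀ lam, Φ lam = -⟪b, lam⟫ - fstar (-(LinearMap.adjoint A lam))) :
    ∀ lam ∈ LinearMap.range A, ∀ lam' ∈ LinearMap.range A,
      Φ lam' ≤ Φ lam + ⟪gradient Φ lam, lam' - lam⟫ -
        σmin ^ 2 / (2 * Lf) * ‖lam - lam'‖ ^ 2 := by
  intro lam hlam lam' hlam'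
  have hf : StrongConvexOn univ μf f := strongConvexOn_iff_convex.mpr hsc
  have hconj : IsFenchelConjugate f fstar := hfstar
  set T := LinearMap.adjoint A
  obtain ⟨x, hx, hval⟩ := hconj.exists_gradient_eq_and_eq hf hμf hdiff (-(T lam))
  have hgrad : gradient Φ lam = -b + A x := by
    rw [show Φ = _ from funext hΦ]
    exact ((hconj.hasGradientAt hf hμf (hdiff x) hx hval).neg_inner_sub_comp_neg_adjoint
      A b).gradient
  have hlower := hconj.add_inner_add_sq_le hLf hdiff hsmooth hx hval (-(T lam'))
  have hdiff_eq : -(T lam') - -(T lam) = T (lam - lam') := by rw [map_sub]; abel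
  have hsing : σmin ^ 2 / (2 * Lf) * ‖lam - lam'‖ ^ 2 ≤ 1 / (2 * Lf) * ‖T (lam - lam')‖ ^ 2 := by
    rw [div_mul_eq_mul_div, one_div_mul_eq_div, ← mul_pow]
    gcongr
    exact hA _ (sub_mem hlam hlam')
  rw [hdiff_eq, LinearMap.adjoint_inner_right] at hlower
  rw [hΦ, hΦ, hgrad]
  simp only [inner_add_left, inner_neg_left, inner_sub_right] at hlower ⊢
  linarith
end

section
/- Let A ∈ ℝ^{(2N-1)d × 2Nd} be the block bidiagonal matrix with blocks A_{i,i} = I_d and A_{i,i+1} = -I_d for i = 1,...,2N-1 (all other blocks zero). Then the condition number κ_A = σ_max(A)/σ_min(A) satisfies κ_A ≤ √(2N² - 1). -/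
/-!
The squared singular values of `A` are the eigenvalues of `A Aᵀ`, and `v ⬝ (A Aᵀ v) = ‖Aᵀ v‖²`.
On each block coordinate, `Aᵀ` is the forward difference of the coordinate sequence of `v`
padded by a zero at both ends. A discrete Wirtinger inequality `8 ∑ f² ≤ n² ∑ (Δf)²` for
sequences vanishing at `0` and `n` bounds the spectrum below by `8 / n²`; applied to `(-1)ⁱ f`
it bounds the spectrum above by `4 - 8 / n²`. For `n = 2N` the ratio of the bounds is `2N² - 1`.
-/

open Real Matrix Finset

section Sequence

variable {n : ℕ} {f : ℕ → ℝ}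

lemma sum_range_sq_succ_eq (hf0 : f 0 = 0) (hfn : f n = 0) :
    ∑ i ∈ range n, f (i + 1) ^ 2 = ∑ i ∈ range n, f i ^ 2 := by
  have h := sum_range_succ' (fun i => f i ^ 2) n
  rw [sum_range_succ, hfn, hf0] at h
  linarith

/-- Ground state substitution: with `c j = j (n - j)` and `f = c u`, each `(Δf)²` is
`c_i c_{i+1} (Δu)²` plus a telescoping term plus `2 c_{i+1} u_{i+1}²`, and `c ≤ n² / 4`. -/
theorem discrete_wirtinger (hf0 : f 0 = 0) (hfn : f n = 0) :
    8 * ∑ i ∈ range n, f i ^ 2 ≤ (n : ℝ) ^ 2 * ∑ i ∈ range n, (f (i + 1) - f i) ^ 2 := by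
  set c : ℕ → ℝ := fun j => j * (n - j)
  set u : ℕ → ℝ := fun j => f j / c j
  set H : ℕ → ℝ := fun j => (n - 2 * j - 1) * c j * u j ^ 2
  have hf : ∀ j ≤ n, f j = c j * u j := by
    intro j hj
    refine (mul_div_cancel_of_imp' fun hc => ?_).symm
    rcases mul_eq_zero.mp hc with h | h
    · rw [Nat.cast_eq_zero.mp h, hf0]
    · rw [show j = n by exact_mod_cast (sub_eq_zero.mp h).symm, hfn]
  have edge : ∀ i ∈ range n,
      8 * f (i + 1) ^ 2 + n ^ 2 * (H (i + 1) - H i) ≤ n ^ 2 * (f (i + 1) - f i) ^ 2 := by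
    intro i hi
    have hin : (i : ℝ) + 1 ≤ n := by exact_mod_cast mem_range.mp hi
    have hci : 0 ≤ c i := by simp only [c]; nlinarith
    have hci' : 0 ≤ c (i + 1) := by simp only [c]; push_cast; nlinarith
    rw [hf (i + 1) (mem_range.mp hi), hf i (mem_range.mp hi).le]
    have key : (n : ℝ) ^ 2 * (c (i + 1) * u (i + 1) - c i * u i) ^ 2
        - (8 * (c (i + 1) * u (i + 1)) ^ 2 + n ^ 2 * (H (i + 1) - H i))
        = n ^ 2 * c i * c (i + 1) * (u (i + 1) - u i) ^ 2
          + 2 * c (i + 1) * (n - 2 * (i + 1)) ^ 2 * u (i + 1) ^ 2 := by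
      simp only [c, H]; push_cast; ring
    have hrest : 0 ≤ n ^ 2 * c i * c (i + 1) * (u (i + 1) - u i) ^ 2
        + 2 * c (i + 1) * (n - 2 * (i + 1)) ^ 2 * u (i + 1) ^ 2 :=
      add_nonneg (mul_nonneg (mul_nonneg (mul_nonneg (sq_nonneg _) hci) hci') (sq_nonneg _))
        (mul_nonneg (mul_nonneg (mul_nonneg zero_le_two hci') (sq_nonneg _)) (sq_nonneg _))
    linarith
  have hH : ∑ i ∈ range n, (H (i + 1) - H i) = 0 := by
    rw [sum_range_sub]; simp [H, c]
  have := sum_le_sum edge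
  rw [sum_add_distrib, ← mul_sum, ← mul_sum, ← mul_sum, hH, sum_range_sq_succ_eq hf0 hfn] at this
  linarith

theorem discrete_wirtinger_alternating (hf0 : f 0 = 0) (hfn : f n = 0) :
    (n : ℝ) ^ 2 * ∑ i ∈ range n, (f (i + 1) - f i) ^ 2
      ≤ (4 * n ^ 2 - 8) * ∑ i ∈ range n, f i ^ 2 := by
  have hsign : ∀ i, ((-1 : ℝ) ^ i) ^ 2 = 1 := fun i => by
    rw [← pow_mul, mul_comm, pow_mul]; simp
  have h := discrete_wirtinger (f := fun i => (-1) ^ i * f i) (n := n)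
    (by simp [hf0]) (by simp [hfn])
  have hsq : ∀ i, ((-1 : ℝ) ^ i * f i) ^ 2 = f i ^ 2 := fun i => by
    rw [mul_pow, hsign, one_mul]
  have hdiff : ∀ i, ((-1 : ℝ) ^ (i + 1) * f (i + 1) - (-1) ^ i * f i) ^ 2
      = 2 * f (i + 1) ^ 2 + 2 * f i ^ 2 - (f (i + 1) - f i) ^ 2 := fun i => by
    calc _ = ((-1 : ℝ) ^ i) ^ 2 * (f (i + 1) + f i) ^ 2 := by ring
      _ = _ := by rw [hsign]; ring
  simp only [hsq, hdiff, sum_sub_distrib, sum_add_distrib, ← mul_sum,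
    sum_range_sq_succ_eq hf0 hfn] at h
  linarith

end Sequence

theorem Matrix.spectrum_subset_Icc_of_dotProduct_mulVec {ι : Type*} [Fintype ι] [DecidableEq ι]
    {M : Matrix ι ι ℝ} {a b : ℝ} (ha : ∀ v, a * (v ⬝ᵥ v) ≤ v ⬝ᵥ M *ᵥ v)
    (hb : ∀ v, v ⬝ᵥ M *ᵥ v ≤ b * (v ⬝ᵥ v)) : spectrum ℝ M ⊆ Set.Icc a b := by
  intro μ hμ
  rw [← spectrum_toLin'] at hμ
  obtain ⟨v, hv⟩ := (Module.End.HasEigenvalue.of_mem_spectrum hμ).exists_hasEigenvector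
  have hMv : v ⬝ᵥ M *ᵥ v = μ * (v ⬝ᵥ v) := by
    rw [← toLin'_apply, hv.apply_eq_smul, dotProduct_smul, smul_eq_mul]
  have hvv : 0 < v ⬝ᵥ v := by simpa using dotProduct_star_self_pos_iff.mpr hv.2
  exact ⟨le_of_mul_le_mul_right (hMv ▸ ha v) hvv, le_of_mul_le_mul_right (hMv ▸ hb v) hvv⟩

theorem sqrt_sSup_div_sqrt_sInf_le {S : Set ℝ} {a b : ℝ} (hS : S ⊆ Set.Icc a b) (ha : 0 < a) :
    √(sSup S) / √(sInf S) ≤ √(b / a) := by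
  rcases S.eq_empty_or_nonempty with rfl | hne
  · simp
  have hSup : sSup S ≤ b := csSup_le hne fun s hs => (hS hs).2
  have hInf : a ≤ sInf S := le_csInf hne fun s hs => (hS hs).1
  have hSup0 : 0 ≤ sSup S := Real.sSup_nonneg fun s hs => ha.le.trans (hS hs).1
  rw [← sqrt_div' _ (ha.le.trans hInf)]
  exact sqrt_le_sqrt (div_le_div₀ (hSup0.trans hSup) hSup ha hInf)

def Fin.padZero {m : ℕ} (w : Fin m → ℝ) : ℕ → ℝ
  | 0 => 0
  | j + 1 => if h : j < m then w ⟨j, h⟩ else 0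

namespace Fin

variable {m : ℕ} (w : Fin m → ℝ)

@[simp] lemma padZero_zero : padZero w 0 = 0 := rfl

@[simp] lemma padZero_succ_val (i : Fin m) : padZero w (i + 1) = w i := by
  simp [padZero]

lemma padZero_succ_self : padZero w (m + 1) = 0 := by
  simp [padZero]

lemma sum_ite_val_eq_padZero_succ (j : ℕ) :
    ∑ i : Fin m, (if j = i then w i else 0) = padZero w (j + 1) := by
  by_cases h : j < m
  · rw [sum_eq_single ⟨j, h⟩ (fun i _ hi => if_neg fun hj => hi (Fin.ext hj.symm)) (by simp)]
    simp [padZero, h]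
  · rw [sum_eq_zero fun i _ => if_neg (by omega)]
    simp [padZero, h]

lemma sum_ite_val_succ_eq_padZero (j : ℕ) :
    ∑ i : Fin m, (if j = i + 1 then w i else 0) = padZero w j := by
  cases j with
  | zero => simp
  | succ j => simpa using sum_ite_val_eq_padZero_succ w j

lemma sum_range_padZero_sq : ∑ j ∈ range (m + 1), padZero w j ^ 2 = ∑ i, w i ^ 2 := by
  simp [sum_range_succ', ← Fin.sum_univ_eq_sum_range (fun j => padZero w (j + 1) ^ 2)]

lemma dotProduct_self_eq_sum_padZero {ι : Type*} [Fintype ι] (v : Fin m × ι → ℝ) :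
    v ⬝ᵥ v = ∑ k, ∑ j ∈ range (m + 1), padZero (fun i => v (i, k)) j ^ 2 := by
  simp_rw [sum_range_padZero_sq, dotProduct, Fintype.sum_prod_type, sq]
  exact sum_comm

end Fin

def blockBidiagonal (m n : ℕ) (ι : Type*) [DecidableEq ι] : Matrix (Fin m × ι) (Fin n × ι) ℝ :=
  of fun p q => if (q.1 : ℕ) = p.1 ∧ q.2 = p.2 then 1
    else if (q.1 : ℕ) = p.1 + 1 ∧ q.2 = p.2 then -1 else 0

namespace blockBidiagonal

variable {m n : ℕ} {ι : Type*} [Fintype ι] [DecidableEq ι]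

lemma transpose_mulVec_apply (v : Fin m × ι → ℝ) (q : Fin n) (k : ι) :
    ((blockBidiagonal m n ι)ᵀ *ᵥ v) (q, k)
      = Fin.padZero (fun i => v (i, k)) (q + 1) - Fin.padZero (fun i => v (i, k)) q := by
  have hterm : ∀ p : Fin m × ι, blockBidiagonal m n ι p (q, k) * v p
      = (if k = p.2 then if (q : ℕ) = p.1 then v p else 0 else 0)
        - (if k = p.2 then if (q : ℕ) = p.1 + 1 then v p else 0 else 0) := by
    rintro ⟨i, l⟩
    by_cases hk : k = l
    · subst hk
      by_cases hi : (q : ℕ) = i <;> by_cases hi' : (q : ℕ) = i + 1 <;>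
        simp [blockBidiagonal, hi, hi']
    · simp [blockBidiagonal, hk]
  simp only [mulVec, dotProduct, transpose_apply, hterm, sum_sub_distrib, Fintype.sum_prod_type,
    sum_ite_eq, mem_univ, if_true, Fin.sum_ite_val_eq_padZero_succ,
    Fin.sum_ite_val_succ_eq_padZero]

lemma transpose_mulVec_dotProduct_self (v : Fin m × ι → ℝ) :
    (blockBidiagonal m n ι)ᵀ *ᵥ v ⬝ᵥ (blockBidiagonal m n ι)ᵀ *ᵥ v
      = ∑ k, ∑ i ∈ range n,
          (Fin.padZero (fun i => v (i, k)) (i + 1) - Fin.padZero (fun i => v (i, k)) i) ^ 2 := by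
  simp only [dotProduct, Fintype.sum_prod_type, transpose_mulVec_apply, ← sq]
  rw [sum_comm]
  exact sum_congr rfl fun k _ => Fin.sum_univ_eq_sum_range
    (fun i => (Fin.padZero (fun i => v (i, k)) (i + 1) - Fin.padZero (fun i => v (i, k)) i) ^ 2) n

theorem le_transpose_mulVec_dotProduct_self (h : m + 1 = n) (v : Fin m × ι → ℝ) :
    8 * (v ⬝ᵥ v) ≤ n ^ 2 * ((blockBidiagonal m n ι)ᵀ *ᵥ v ⬝ᵥ (blockBidiagonal m n ι)ᵀ *ᵥ v) := by
  subst h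
  rw [Fin.dotProduct_self_eq_sum_padZero, transpose_mulVec_dotProduct_self, mul_sum, mul_sum]
  exact sum_le_sum fun k _ => discrete_wirtinger rfl (Fin.padZero_succ_self _)

theorem transpose_mulVec_dotProduct_self_le (h : m + 1 = n) (v : Fin m × ι → ℝ) :
    n ^ 2 * ((blockBidiagonal m n ι)ᵀ *ᵥ v ⬝ᵥ (blockBidiagonal m n ι)ᵀ *ᵥ v)
      ≤ (4 * n ^ 2 - 8) * (v ⬝ᵥ v) := by
  subst h
  rw [transpose_mulVec_dotProduct_self, Fin.dotProduct_self_eq_sum_padZero v, mul_sum, mul_sum]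
  exact sum_le_sum fun k _ => discrete_wirtinger_alternating rfl (Fin.padZero_succ_self _)

theorem spectrum_mul_transpose_subset (h : m + 1 = n) :
    spectrum ℝ (blockBidiagonal m n ι * (blockBidiagonal m n ι)ᵀ)
      ⊆ Set.Icc (8 / n ^ 2) (4 - 8 / n ^ 2) := by
  have hn : (0 : ℝ) < n ^ 2 := by rw [← h]; positivity
  have hquad : ∀ v, v ⬝ᵥ (blockBidiagonal m n ι * (blockBidiagonal m n ι)ᵀ) *ᵥ v
      = (blockBidiagonal m n ι)ᵀ *ᵥ v ⬝ᵥ (blockBidiagonal m n ι)ᵀ *ᵥ v := fun v => by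
    rw [← mulVec_mulVec, dotProduct_mulVec, ← mulVec_transpose]
  refine spectrum_subset_Icc_of_dotProduct_mulVec (fun v => ?_) (fun v => ?_)
  · rw [hquad, div_mul_eq_mul_div, div_le_iff₀' hn]
    exact le_transpose_mulVec_dotProduct_self h v
  · rw [hquad, show (4 - 8 / (n : ℝ) ^ 2) = (4 * n ^ 2 - 8) / n ^ 2 by
        rw [sub_div, mul_div_cancel_right₀ _ hn.ne'],
      div_mul_eq_mul_div, le_div_iff₀' hn]
    exact transpose_mulVec_dotProduct_self_le h v

end blockBidiagonal

theorem block_bidiagonal_condition_number_general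
    (N d : ℕ) (hN : 1 ≤ N)
    (A : Matrix (Fin (2 * N - 1) × Fin d) (Fin (2 * N) × Fin d) ℝ)
    (hA : ∀ p q, A p q =
      if (q.1 : ℕ) = (p.1 : ℕ) ∧ q.2 = p.2 then 1
      else if (q.1 : ℕ) = (p.1 : ℕ) + 1 ∧ q.2 = p.2 then -1 else 0)
    (σmax σmin : ℝ) (hσmax0 : 0 ≤ σmax) (hσmin0 : 0 ≤ σmin)
    (hσmax : σmax ^ 2 = sSup (spectrum ℝ (A * A.transpose)))
    (hσmin : σmin ^ 2 = sInf (spectrum ℝ (A * A.transpose))) :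
    σmax / σmin ≤ Real.sqrt (2 * (N : ℝ) ^ 2 - 1) := by
  obtain rfl : A = blockBidiagonal (2 * N - 1) (2 * N) (Fin d) := Matrix.ext hA
  have hS := blockBidiagonal.spectrum_mul_transpose_subset (ι := Fin d)
    (show 2 * N - 1 + 1 = 2 * N by omega)
  rw [← sqrt_sq hσmax0, ← sqrt_sq hσmin0, hσmax, hσmin]
  convert sqrt_sSup_div_sqrt_sInf_le hS (by positivity) using 2
  push_cast
  field_simp
  ring

/-- The block bidiagonal matrix `A ∈ ℝ^{(2N-1)d × 2Nd}` with blocks `A_{i,i} = I_d` and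
`A_{i,i+1} = -I_d` has condition number `κ_A = σ_max(A)/σ_min(A) ≤ √(2N² - 1)`, where the
singular values squared of `A` are the extreme eigenvalues of `AAᵀ`. -/
theorem block_bidiagonal_condition_number
    (N d : ℕ) (hN : 1 ≤ N) (hd : 1 ≤ d)
    (A : Matrix (Fin (2 * N - 1) × Fin d) (Fin (2 * N) × Fin d) ℝ)
    (hA : ∀ p q, A p q =
      if (q.1 : ℕ) = (p.1 : ℕ) ∧ q.2 = p.2 then 1
      else if (q.1 : ℕ) = (p.1 : ℕ) + 1 ∧ q.2 = p.2 then -1 else 0)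
    (σmax σmin : ℝ) (hσmax0 : 0 ≤ σmax) (hσmin0 : 0 ≤ σmin)
    (hσmax : σmax ^ 2 = sSup (spectrum ℝ (A * A.transpose)))
    (hσmin : σmin ^ 2 = sInf (spectrum ℝ (A * A.transpose))) :
    σmax / σmin ≤ Real.sqrt (2 * (N : ℝ) ^ 2 - 1) :=
  block_bidiagonal_condition_number_general N d hN A hA σmax σmin hσmax0 hσmin0 hσmax hσmin
end

section
/- Fix d ≥ 1, real numbers L_f > μ_f > 0, α > 0, set β = 4μ_f/(L_f - μ_f), κ_f = L_f/μ_f, and q = (√κ_f - 1)/(√κ_f + 1). Define x* ∈ ℝ^d by x*_i = α(q^i + q^{2d+1-i})/(1 + q^{2d+1}). Then x* satisfies the tridiagonal system: (2+β)x*_1 - x*_2 = α; -x*_{i-1} + (2+β)x*_i - x*_{i+1} = 0 for 2 ≤ i ≤ d-1; and -x*_{d-1} + (1+β)x*_d = 0. -/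
open Real

/-!
The roots of `λ² - (2 + β) λ + 1` are `q` and `1 / q`, so `i ↦ q ^ i` and `i ↦ q ^ (N - i)` both
solve the interior recurrence `-x_{i-1} + (2 + β) x_i - x_{i+1} = 0`, and so does their sum
`x_i = c (q ^ i + q ^ (N - i))`. With `N = 2d + 1` this sum is symmetric under `i ↦ N - i`, hence
`x_{d+1} = x_d`, which turns the recurrence at `i = d` into the last equation; the first equation
is the recurrence at `i = 1` once `c` is scaled so that `x_0 = α`.
-/

def reflectedGeom (c q : ℝ) (N i : ℕ) : ℝ := c * (q ^ i + q ^ (N - i))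

lemma reflectedGeom_zero (c q : ℝ) (N : ℕ) : reflectedGeom c q N 0 = c * (1 + q ^ N) := by
  simp [reflectedGeom]

lemma reflectedGeom_sub (c q : ℝ) {N i : ℕ} (hi : i ≤ N) :
    reflectedGeom c q N (N - i) = reflectedGeom c q N i := by
  simp only [reflectedGeom, Nat.sub_sub_self hi, add_comm]

lemma reflectedGeom_recurrence {β q : ℝ} (hroot : (2 + β) * q = q ^ 2 + 1) (c : ℝ) {N i : ℕ}
    (hi : 1 ≤ i) (hiN : i < N) :
    -reflectedGeom c q N (i - 1) + (2 + β) * reflectedGeom c q N i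
      - reflectedGeom c q N (i + 1) = 0 := by
  obtain ⟨j, rfl⟩ : ∃ j, i = j + 1 := ⟨i - 1, by omega⟩
  obtain ⟨k, rfl⟩ : ∃ k, N = j + 2 + k := ⟨N - (j + 2), by omega⟩
  have e0 : j + 2 + k - j = k + 2 := by omega
  have e1 : j + 2 + k - (j + 1) = k + 1 := by omega
  have e2 : j + 2 + k - (j + 1 + 1) = k := by omega
  simp only [reflectedGeom, Nat.add_sub_cancel, e0, e1, e2]
  linear_combination c * (q ^ j + q ^ k) * hroot

lemma two_add_four_div_mul_eq {s : ℝ} (hs : 1 < s) :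
    (2 + 4 / (s ^ 2 - 1)) * ((s - 1) / (s + 1)) = ((s - 1) / (s + 1)) ^ 2 + 1 := by
  have hs2 : s ^ 2 - 1 ≠ 0 := by nlinarith
  have hs1 : s + 1 ≠ 0 := by linarith
  field_simp
  ring

lemma sub_one_div_add_one_pos {s : ℝ} (hs : 1 < s) : 0 < (s - 1) / (s + 1) :=
  div_pos (by linarith) (by linarith)

section Parameters

variable {Lf μf : ℝ}

lemma one_lt_sqrt_div (hμ : 0 < μf) (hL : μf < Lf) : 1 < √(Lf / μf) :=
  (lt_sqrt zero_le_one).2 (by rw [one_pow]; exact (one_lt_div hμ).2 hL)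

lemma four_mul_div_sub_eq (hμ : 0 < μf) (hL : μf < Lf) :
    4 * μf / (Lf - μf) = 4 / (√(Lf / μf) ^ 2 - 1) := by
  have hLμ : 0 < Lf - μf := sub_pos.2 hL
  rw [sq_sqrt (div_pos (hμ.trans hL) hμ).le]
  field_simp

end Parameters

theorem tridiagonal_system_solution_general
    (d : ℕ) (hd : 1 ≤ d) (Lf μf α : ℝ) (hμ : 0 < μf) (hL : μf < Lf)
    (β q : ℝ) (hβ : β = 4 * μf / (Lf - μf))
    (hq : q = (Real.sqrt (Lf / μf) - 1) / (Real.sqrt (Lf / μf) + 1))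
    (xs : ℕ → ℝ)
    (hxs : ∀ i, i ≤ 2 * d + 1 →
      xs i = α * (q ^ i + q ^ (2 * d + 1 - i)) / (1 + q ^ (2 * d + 1))) :
    (2 + β) * xs 1 - xs 2 = α ∧
      (∀ i, 2 ≤ i → i ≤ d - 1 →
        -xs (i - 1) + (2 + β) * xs i - xs (i + 1) = 0) ∧
      -xs (d - 1) + (1 + β) * xs d = 0 := by
  have hs := one_lt_sqrt_div hμ hL
  have hroot : (2 + β) * q = q ^ 2 + 1 := by
    rw [hβ, hq, four_mul_div_sub_eq hμ hL]; exact two_add_four_div_mul_eq hs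
  have hden : 1 + q ^ (2 * d + 1) ≠ 0 := by
    have := hq ▸ sub_one_div_add_one_pos hs; positivity
  set x := reflectedGeom (α / (1 + q ^ (2 * d + 1))) q (2 * d + 1) with hxdef
  have hx : ∀ i, i ≤ 2 * d + 1 → xs i = x i := fun i hi => by
    rw [hxs i hi, hxdef, reflectedGeom, div_mul_eq_mul_div, mul_div_right_comm]
  have hrec : ∀ i, 1 ≤ i → i < 2 * d + 1 → -x (i - 1) + (2 + β) * x i - x (i + 1) = 0 :=
    fun _ => reflectedGeom_recurrence hroot _
  have hx0 : x 0 = α := by rw [hxdef, reflectedGeom_zero, div_mul_cancel₀ _ hden]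
  have hmid : x (d + 1) = x d := by
    have := reflectedGeom_sub (α / (1 + q ^ (2 * d + 1))) q (show d ≤ 2 * d + 1 by omega)
    rwa [show 2 * d + 1 - d = d + 1 by omega] at this
  refine ⟨?_, fun i hi2 hid => ?_, ?_⟩
  · rw [hx 1 (by omega), hx 2 (by omega)]
    linarith [hrec 1 le_rfl (by omega)]
  · rw [hx (i - 1) (by omega), hx i (by omega), hx (i + 1) (by omega)]
    exact hrec i (by omega) (by omega)
  · rw [hx (d - 1) (by omega), hx d (by omega)]
    linarith [hrec d hd (by omega)]

/-- For `d ≥ 1`, `L_f > μ_f > 0`, `α > 0`, `β = 4μ_f/(L_f-μ_f)`, `κ_f = L_f/μ_f`,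
`q = (√κ_f - 1)/(√κ_f + 1)`, the vector `x*_i = α(qⁱ + q^{2d+1-i})/(1 + q^{2d+1})`
solves the tridiagonal system `(2+β)x*_1 - x*_2 = α`,
`-x*_{i-1} + (2+β)x*_i - x*_{i+1} = 0` for `2 ≤ i ≤ d-1`, and
`-x*_{d-1} + (1+β)x*_d = 0`. -/
theorem tridiagonal_system_solution
    (d : ℕ) (hd : 1 ≤ d) (Lf μf α : ℝ) (hμ : 0 < μf) (hL : μf < Lf) (hα : 0 < α)
    (β q : ℝ) (hβ : β = 4 * μf / (Lf - μf))
    (hq : q = (Real.sqrt (Lf / μf) - 1) / (Real.sqrt (Lf / μf) + 1))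
    (xs : ℕ → ℝ)
    (hxs : ∀ i, i ≤ 2 * d + 1 →
      xs i = α * (q ^ i + q ^ (2 * d + 1 - i)) / (1 + q ^ (2 * d + 1))) :
    (2 + β) * xs 1 - xs 2 = α ∧
      (∀ i, 2 ≤ i → i ≤ d - 1 →
        -xs (i - 1) + (2 + β) * xs i - xs (i + 1) = 0) ∧
      -xs (d - 1) + (1 + β) * xs d = 0 :=
  tridiagonal_system_solution_general d hd Lf μf α hμ hL β q hβ hq xs hxs
end

section
/- Let 0 < q < 1, α > 0, d ≥ 1, 0 ≤ K ≤ d, and define x*_i = α(q^i + q^{2d+1-i})/(1 + q^{2d+1}) for i = 1,...,d. Then Σ_{i=K+1}^d (x*_i)² ≥ q^{2K} · ((d-K)/d) · Σ_{i=1}^d (x*_i)². -/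
open Real Finset

/-- Tail-sum lower bound: for `0 < q < 1`, `α > 0`, `d ≥ 1`, `0 ≤ K ≤ d` and
`x*_i = α(qⁱ + q^{2d+1-i})/(1 + q^{2d+1})`:
`Σ_{i=K+1}^d (x*_i)² ≥ q^{2K}·((d-K)/d)·Σ_{i=1}^d (x*_i)²`. -/
theorem tail_sum_lower_bound
    (d K : ℕ) (hd : 1 ≤ d) (hK : K ≤ d)
    (q α : ℝ) (hq0 : 0 < q) (hq1 : q < 1) (hα : 0 < α)
    (xs : ℕ → ℝ)
    (hxs : ∀ i, 1 ≤ i → i ≤ d →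
      xs i = α * (q ^ i + q ^ (2 * d + 1 - i)) / (1 + q ^ (2 * d + 1))) :
    q ^ (2 * K) * (((d : ℝ) - K) / d) * ∑ i ∈ Finset.Icc 1 d, (xs i) ^ 2 ≤
      ∑ i ∈ Finset.Icc (K + 1) d, (xs i) ^ 2 := by
  set m := d - K with hm
  have hmd : m + K = d := Nat.sub_add_cancel hK
  have hcast : ((d : ℝ) - K) = (m : ℝ) := by
    rw [hm, Nat.cast_sub hK]
  have hc0 : (0:ℝ) < 1 + q ^ (2*d+1) := by positivity
  -- positivity of xs on the range
  have hxpos : ∀ i, 1 ≤ i → i ≤ d → 0 < xs i := by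
    intro i h1 h2; rw [hxs i h1 h2]; positivity
  -- xs is antitone on [1, d]
  have hanti : ∀ i j, 1 ≤ i → i ≤ j → j ≤ d → xs j ≤ xs i := by
    intro i j h1 hij hjd
    rw [hxs i h1 (le_trans hij hjd), hxs j (le_trans h1 hij) hjd]
    have key : q ^ j + q ^ (2*d+1-j) ≤ q ^ i + q ^ (2*d+1-i) := by
      obtain ⟨e, rfl⟩ := Nat.exists_eq_add_of_le hij
      have h2 : 2*d+1 - i = (2*d+1 - (i+e)) + e := by omega
      rw [h2, pow_add, pow_add]
      have hba : q ^ (2*d+1-(i+e)) ≤ q ^ i :=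
        pow_le_pow_of_le_one hq0.le hq1.le (by omega)
      have hte : q ^ e ≤ 1 := pow_le_one₀ hq0.le hq1.le
      have h0i : (0:ℝ) ≤ q ^ i := by positivity
      have h0b : (0:ℝ) ≤ q ^ (2*d+1-(i+e)) := by positivity
      have h0e : (0:ℝ) ≤ q ^ e := by positivity
      nlinarith
    gcongr
  -- squares: antitone and nonneg
  have hsq : ∀ i j, 1 ≤ i → i ≤ j → j ≤ d → xs j ^ 2 ≤ xs i ^ 2 := by
    intro i j h1 hij hjd
    have := hanti i j h1 hij hjd
    have h0 := (hxpos j (le_trans h1 hij) hjd).le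
    nlinarith
  -- Step A: shift inequality, termwise
  have hshift : ∀ j, 1 ≤ j → j ≤ m → q ^ (2*K) * xs j ^ 2 ≤ xs (j + K) ^ 2 := by
    intro j h1 hjm
    have hjd : j ≤ d := by omega
    have hjKd : j + K ≤ d := by omega
    have hlin : q ^ K * xs j ≤ xs (j + K) := by
      rw [hxs j h1 hjd, hxs (j+K) (by omega) hjKd]
      have h2 : 2*d+1 - j = (2*d+1 - (j+K)) + K := by omega
      have hXY : q ^ K * (q ^ j + q ^ (2*d+1-j))
          ≤ q ^ (j+K) + q ^ (2*d+1-(j+K)) := by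
        rw [h2, pow_add, pow_add]
        have h1' : q ^ K ≤ 1 := pow_le_one₀ hq0.le hq1.le
        have h0b : (0:ℝ) ≤ q ^ (2*d+1-(j+K)) := by positivity
        have h0K : (0:ℝ) ≤ q ^ K := by positivity
        have hb1 : q ^ (2*d+1-(j+K)) * q ^ K ≤ q ^ (2*d+1-(j+K)) :=
          mul_le_of_le_one_right h0b h1'
        have hb2 : q ^ (2*d+1-(j+K)) * q ^ K * q ^ K ≤ q ^ (2*d+1-(j+K)) * q ^ K :=
          mul_le_of_le_one_right (mul_nonneg h0b h0K) h1'
        nlinarith [hb1, hb2]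
      calc q ^ K * (α * (q ^ j + q ^ (2*d+1-j)) / (1 + q ^ (2*d+1)))
          = α * (q ^ K * (q ^ j + q ^ (2*d+1-j))) / (1 + q ^ (2*d+1)) := by ring
        _ ≤ α * (q ^ (j+K) + q ^ (2*d+1-(j+K))) / (1 + q ^ (2*d+1)) := by gcongr
    have h0l : (0:ℝ) ≤ q ^ K * xs j := by
      have := (hxpos j h1 hjd).le; positivity
    calc q ^ (2*K) * xs j ^ 2 = (q ^ K * xs j) ^ 2 := by ring
      _ ≤ xs (j + K) ^ 2 := by nlinarith
  -- rewrite tail sum by reindexing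
  have hreindex : ∑ i ∈ Finset.Icc (K+1) d, (xs i)^2
      = ∑ j ∈ Finset.Icc 1 m, (xs (j + K))^2 := by
    rw [← hmd]
    rw [show Finset.Icc (K+1) (m+K) = (Finset.Icc 1 m).map (addRightEmbedding K) by
      rw [Finset.map_add_right_Icc]; congr 1; omega]
    rw [Finset.sum_map]; rfl
  have stepA : q ^ (2*K) * ∑ j ∈ Finset.Icc 1 m, (xs j)^2
      ≤ ∑ i ∈ Finset.Icc (K+1) d, (xs i)^2 := by
    rw [hreindex, Finset.mul_sum]
    apply Finset.sum_le_sum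
    intro j hj
    rw [Finset.mem_Icc] at hj
    exact hshift j hj.1 hj.2
  -- Step B: (m/d) * S ≤ S1
  rcases Nat.eq_zero_or_pos m with hm0 | hm1
  · -- K = d
    have hKd : K = d := by omega
    rw [hcast, hm0]
    simp
    have : Finset.Icc (K+1) d = ∅ := by
      rw [Finset.Icc_eq_empty_iff]; omega
    rw [this]; simp
  · have hSsplit : ∑ i ∈ Finset.Ioc 0 m, (xs i)^2 + ∑ i ∈ Finset.Ioc m d, (xs i)^2
        = ∑ i ∈ Finset.Ioc 0 d, (xs i)^2 :=
      Finset.sum_Ioc_consecutive _ (Nat.zero_le m) (by omega)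
    have hIcc1 : ∀ n : ℕ, Finset.Icc 1 n = Finset.Ioc 0 n := fun n => Finset.Icc_add_one_left_eq_Ioc 0 n
    have hxm := hxpos m hm1 (by omega)
    -- lower bound for head sum
    have hS1 : (m : ℝ) * xs m ^ 2 ≤ ∑ i ∈ Finset.Ioc 0 m, (xs i)^2 := by
      have := Finset.card_nsmul_le_sum (Finset.Ioc 0 m) (fun i => (xs i)^2) (xs m ^ 2)
        (fun i hi => by
          rw [Finset.mem_Ioc] at hi
          exact hsq i m hi.1 hi.2 (by omega))
      simpa [Nat.card_Ioc, nsmul_eq_mul] using this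
    -- upper bound for second chunk
    have hS2 : ∑ i ∈ Finset.Ioc m d, (xs i)^2 ≤ ((d : ℝ) - m) * xs m ^ 2 := by
      have := Finset.sum_le_card_nsmul (Finset.Ioc m d) (fun i => (xs i)^2) (xs m ^ 2)
        (fun i hi => by
          rw [Finset.mem_Ioc] at hi
          exact hsq m i hm1 hi.1.le hi.2)
      rw [Nat.card_Ioc, nsmul_eq_mul] at this
      have hc2 : ((d - m : ℕ) : ℝ) = (d : ℝ) - m := Nat.cast_sub (by omega)
      rw [hc2] at this
      exact this
    have hd0 : (0:ℝ) < d := by exact_mod_cast hd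
    have hm0' : (0:ℝ) < m := by exact_mod_cast hm1
    have hmd' : (m:ℝ) ≤ d := by exact_mod_cast (by omega : m ≤ d)
    have stepB : (m : ℝ) / d * ∑ i ∈ Finset.Icc 1 d, (xs i)^2
        ≤ ∑ i ∈ Finset.Icc 1 m, (xs i)^2 := by
      rw [hIcc1 d, hIcc1 m, div_mul_eq_mul_div, div_le_iff₀ hd0, ← hSsplit]
      nlinarith [Finset.sum_nonneg (fun i (_ : i ∈ Finset.Ioc 0 m) => sq_nonneg (xs i))]
    calc q ^ (2*K) * (((d : ℝ) - K) / d) * ∑ i ∈ Finset.Icc 1 d, (xs i)^2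
        = q ^ (2*K) * ((m : ℝ) / d * ∑ i ∈ Finset.Icc 1 d, (xs i)^2) := by
          rw [hcast]; ring
      _ ≤ q ^ (2*K) * ∑ j ∈ Finset.Icc 1 m, (xs j)^2 := by
          apply mul_le_mul_of_nonneg_left stepB (by positivity)
      _ ≤ _ := stepA
end

section
/- Let f_0 : ℝ^{2Nd} → ℝ be f_0(x) = Σ_{i=1}^N G(x[i], x[N+i]) where x = (x[1],...,x[2N]) with x[i] ∈ ℝ^d and G : ℝ^d × ℝ^d → ℝ is differentiable and L_f-smooth. Let X = {x : x[1] = ... = x[2N]} and for x define x̄ = (1/2N)Σ_{i=1}^{2N} x[i] and g(v) = G(v,v). Then L_f ‖x - P_X(x - (1/(2L_f))∇f_0(x))‖ ≥ (√N/4) ‖∇g(x̄)‖, where P_X denotes Euclidean projection onto X. -/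
open Real

/-!
Write `B v = (v, …, v)`, `D v = (v, v)` and `Tᵢ x = (x[i], x[N+i])`. Then `f₀ = Σ G ∘ Tᵢ`,
`g = G ∘ D`, `Tᵢ ∘ B = D`, `B* B = 2N`, `P_X = B B* / 2N` and `x̄ = B* x / 2N`, so that
`B* ∇f₀(x) = Σ D* ∇G(Tᵢ x) =: W` and, by Pythagoras, with `c = 1/(2L_f)`,
`‖x - P_X(x - c ∇f₀(x))‖² = ‖x - B x̄‖² + c² ‖W‖² / 2N`.
As `D* ∘ ∇G` is `√2 L_f`-Lipschitz, `N ‖∇g(x̄)‖ ≤ ‖W‖ + √2 L_f Σ ‖D x̄ - Tᵢ x‖`, and since the `Tᵢ`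
cut `x - B x̄` into orthogonal pieces, Cauchy–Schwarz bounds the sum by `√N ‖x - B x̄‖`.
-/

namespace EuclideanSpace

variable {ι α β γ : Type*} [Fintype α] [Fintype β] [Fintype γ]

noncomputable def precomp (σ : β → α) : EuclideanSpace ℝ α →L[ℝ] EuclideanSpace ℝ β :=
  LinearMap.toContinuousLinearMap
    { toFun := fun z => WithLp.toLp 2 (fun b => z (σ b))
      map_add' := fun _ _ => rfl
      map_smul' := fun _ _ => rfl }

@[simp] lemma precomp_apply (σ : β → α) (z : EuclideanSpace ℝ α) (b : β) :
    precomp σ z b = z (σ b) := rfl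

lemma precomp_comp_precomp (σ : β → α) (τ : γ → β) :
    precomp τ ∘L precomp σ = precomp (σ ∘ τ) := rfl

lemma adjoint_precomp_apply [DecidableEq α] (σ : β → α) (y : EuclideanSpace ℝ β) (a : α) :
    (precomp σ).adjoint y a = ∑ b, if σ b = a then y b else 0 := by
  have h := (precomp σ).adjoint_inner_left (EuclideanSpace.single a 1) y
  simp only [EuclideanSpace.inner_single_right, one_mul, conj_trivial] at h
  simp [h, PiLp.inner_apply]

lemma sum_norm_sq_precomp [Fintype ι] {σ : ι → β → α}
    (hσ : Function.Bijective fun p : ι × β => σ p.1 p.2) (z : EuclideanSpace ℝ α) :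
    ∑ i, ‖precomp (σ i) z‖ ^ 2 = ‖z‖ ^ 2 := by
  simp only [EuclideanSpace.norm_sq_eq, precomp_apply]
  rw [← Fintype.sum_prod_type']
  exact hσ.sum_comp fun a => ‖z a‖ ^ 2

end EuclideanSpace

section InnerProductSpace

variable {E F V : Type*} [NormedAddCommGroup E] [InnerProductSpace ℝ E] [CompleteSpace E]
  [NormedAddCommGroup F] [InnerProductSpace ℝ F] [CompleteSpace F]
  [NormedAddCommGroup V] [InnerProductSpace ℝ V] [CompleteSpace V]

theorem HasGradientAt.comp_continuousLinearMap {G : F → ℝ} {g' : F} (T : E →L[ℝ] F) {x : E}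
    (h : HasGradientAt G g' (T x)) : HasGradientAt (G ∘ T) (T.adjoint g') x := by
  rw [hasGradientAt_iff_hasFDerivAt] at h ⊢
  refine (h.comp x T.hasFDerivAt).congr_fderiv ?_
  ext y
  simp [ContinuousLinearMap.adjoint_inner_left]

theorem hasGradientAt_sum_comp {ι : Type*} [Fintype ι] {G : F → ℝ} (hG : Differentiable ℝ G)
    (T : ι → E →L[ℝ] F) (x : E) :
    HasGradientAt (fun z => ∑ i, G (T i z)) (∑ i, (T i).adjoint (gradient G (T i x))) x := by
  rw [hasGradientAt_iff_hasFDerivAt, map_sum]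
  exact HasFDerivAt.fun_sum fun i _ => hasGradientAt_iff_hasFDerivAt.mp
    ((hG _).hasGradientAt.comp_continuousLinearMap (T i))

theorem norm_sq_sub_smul_adjoint (B : V →L[ℝ] E) {m : ℝ} (hm : m ≠ 0)
    (hB : ∀ v, B.adjoint (B v) = m • v) (x y : E) :
    ‖x - m⁻¹ • B (B.adjoint (x - y))‖ ^ 2
      = ‖x - B (m⁻¹ • B.adjoint x)‖ ^ 2 + m⁻¹ * ‖B.adjoint y‖ ^ 2 := by
  have horth : inner ℝ (x - B (m⁻¹ • B.adjoint x)) (B (B.adjoint y)) = 0 := by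
    rw [← ContinuousLinearMap.adjoint_inner_left, map_sub, hB, smul_smul, mul_inv_cancel₀ hm,
      one_smul, sub_self, inner_zero_left]
  have hBB : ‖B (B.adjoint y)‖ ^ 2 = m * ‖B.adjoint y‖ ^ 2 := by
    rw [← real_inner_self_eq_norm_sq, ← ContinuousLinearMap.adjoint_inner_left, hB,
      real_inner_smul_left, real_inner_self_eq_norm_sq]
  have hsplit : x - m⁻¹ • B (B.adjoint (x - y))
      = (x - B (m⁻¹ • B.adjoint x)) + m⁻¹ • B (B.adjoint y) := by
    simp only [map_sub, map_smul, smul_sub]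
    abel
  rw [hsplit, norm_add_sq_real, inner_smul_right, horth, norm_smul, mul_pow, hBB,
    Real.norm_eq_abs, sq_abs]
  field_simp
  ring

end InnerProductSpace

theorem card_mul_norm_le_norm_sum_add {ι F V : Type*} [Fintype ι] [SeminormedAddCommGroup F]
    [SeminormedAddCommGroup V] [NormedSpace ℝ V] {Φ : F → V} {K : ℝ}
    (hΦ : ∀ a b, ‖Φ a - Φ b‖ ≤ K * ‖a - b‖) (u : F) (w : ι → F) :
    Fintype.card ι * ‖Φ u‖ ≤ ‖∑ i, Φ (w i)‖ + K * ∑ i, ‖u - w i‖ :=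
  calc Fintype.card ι * ‖Φ u‖ = ‖∑ i, Φ (w i) + ∑ i, (Φ u - Φ (w i))‖ := by
        simp [Finset.sum_sub_distrib, ← Nat.cast_smul_eq_nsmul ℝ, norm_smul]
    _ ≤ ‖∑ i, Φ (w i)‖ + ∑ i, ‖Φ u - Φ (w i)‖ :=
        (norm_add_le _ _).trans (by gcongr; exact norm_sum_le _ _)
    _ ≤ ‖∑ i, Φ (w i)‖ + K * ∑ i, ‖u - w i‖ := by
        rw [Finset.mul_sum]
        gcongr with i
        exact hΦ _ _

lemma sqrt_div_four_mul_le {n L γ a s r : ℝ} (hn : 0 < n) (hL : 0 < L) (hr : 0 ≤ r)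
    (hr2 : r ^ 2 = s ^ 2 + a ^ 2 / (8 * n * L ^ 2))
    (hγ : n * γ ≤ a + √2 * L * (√n * s)) : √n / 4 * γ ≤ L * r := by
  have hsn : √n * √n = n := mul_self_sqrt hn.le
  have key : a + √2 * L * (√n * s) ≤ 4 * √n * L * r := by
    refine le_of_sq_le_sq ?_ (by positivity)
    have h2 : (√2 * L * (√n * s)) ^ 2 = 2 * n * L ^ 2 * s ^ 2 := by
      rw [mul_pow, mul_pow, mul_pow, sq_sqrt zero_le_two, sq_sqrt hn.le]
      ring
    have h16 : (4 * √n * L * r) ^ 2 = 16 * n * L ^ 2 * s ^ 2 + 2 * a ^ 2 := by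
      rw [mul_pow, mul_pow, mul_pow, sq_sqrt hn.le, hr2]
      field_simp
      ring
    nlinarith [sq_nonneg (a - √2 * L * (√n * s))]
  have h : √n * (√n * γ) ≤ √n * (4 * L * r) := by
    rw [← mul_assoc, hsn]
    linarith
  linarith [le_of_mul_le_mul_left h (sqrt_pos.mpr hn)]

namespace Consensus

open EuclideanSpace

variable (N d : ℕ)

noncomputable def broadcast :
    EuclideanSpace ℝ (Fin d) →L[ℝ] EuclideanSpace ℝ (Fin (2 * N) × Fin d) :=
  precomp Prod.snd

noncomputable def diag : EuclideanSpace ℝ (Fin d) →L[ℝ] EuclideanSpace ℝ (Fin d ⊕ Fin d) :=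
  precomp (Sum.elim id id)

def pairIndex (i : Fin N) : Fin d ⊕ Fin d → Fin (2 * N) × Fin d :=
  Sum.elim (fun s => (⟨i, by omega⟩, s)) (fun s => (⟨N + i, by omega⟩, s))

noncomputable def pair (i : Fin N) :
    EuclideanSpace ℝ (Fin (2 * N) × Fin d) →L[ℝ] EuclideanSpace ℝ (Fin d ⊕ Fin d) :=
  precomp (pairIndex N d i)

lemma broadcast_apply (v : EuclideanSpace ℝ (Fin d)) (p : Fin (2 * N) × Fin d) :
    broadcast N d v p = v p.2 := rfl

lemma adjoint_broadcast_apply (z : EuclideanSpace ℝ (Fin (2 * N) × Fin d)) (j : Fin d) :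
    (broadcast N d).adjoint z j = ∑ k, z (k, j) := by
  simp [broadcast, adjoint_precomp_apply, Fintype.sum_prod_type]

lemma adjoint_broadcast_broadcast (v : EuclideanSpace ℝ (Fin d)) :
    (broadcast N d).adjoint (broadcast N d v) = (2 * N : ℝ) • v := by
  ext j
  simp [adjoint_broadcast_apply, broadcast_apply]

lemma pair_comp_broadcast (i : Fin N) : pair N d i ∘L broadcast N d = diag d := by
  rw [pair, broadcast, diag, precomp_comp_precomp]
  congr 1
  ext (s | s) <;> rfl

lemma pairIndex_bijective :
    Function.Bijective fun p : Fin N × (Fin d ⊕ Fin d) => pairIndex N d p.1 p.2 := by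
  rw [Fintype.bijective_iff_injective_and_card]
  refine ⟨?_, by simp only [Fintype.card_prod, Fintype.card_fin, Fintype.card_sum]; ring⟩
  rintro ⟨i, s | s⟩ ⟨i', s' | s'⟩ h <;>
    simp only [pairIndex, Sum.elim_inl, Sum.elim_inr, Prod.mk.injEq, Fin.ext_iff, Sum.inl.injEq,
      Sum.inr.injEq, reduceCtorEq, and_false] at h ⊢ <;> omega

lemma sum_norm_sq_pair (z : EuclideanSpace ℝ (Fin (2 * N) × Fin d)) :
    ∑ i, ‖pair N d i z‖ ^ 2 = ‖z‖ ^ 2 :=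
  sum_norm_sq_precomp (pairIndex_bijective N d) z

lemma norm_diag (v : EuclideanSpace ℝ (Fin d)) : ‖diag d v‖ = √2 * ‖v‖ := by
  rw [← sq_eq_sq₀ (norm_nonneg _) (by positivity), mul_pow, sq_sqrt zero_le_two,
    EuclideanSpace.norm_sq_eq, EuclideanSpace.norm_sq_eq, Fintype.sum_sum_type]
  simp only [diag, precomp_apply, Sum.elim_inl, Sum.elim_inr, id_eq, norm_eq_abs, sq_abs]
  ring

lemma norm_adjoint_diag_le (y : EuclideanSpace ℝ (Fin d ⊕ Fin d)) :
    ‖(diag d).adjoint y‖ ≤ √2 * ‖y‖ := by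
  have h : ‖diag d‖ ≤ √2 :=
    ContinuousLinearMap.opNorm_le_bound _ (by positivity) fun v => (norm_diag d v).le
  calc ‖(diag d).adjoint y‖ ≤ ‖(diag d).adjoint‖ * ‖y‖ := ContinuousLinearMap.le_opNorm _ _
    _ ≤ √2 * ‖y‖ := by rw [ContinuousLinearMap.adjoint.norm_map]; gcongr

theorem sqrt_div_four_mul_norm_gradient_le (hN : 0 < N) {G : EuclideanSpace ℝ (Fin d ⊕ Fin d) → ℝ}
    (hG : Differentiable ℝ G) {L : ℝ} (hL : 0 < L)
    (hGL : ∀ w w', ‖gradient G w - gradient G w'‖ ≤ L * ‖w - w'‖)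
    (x : EuclideanSpace ℝ (Fin (2 * N) × Fin d)) :
    √N / 4 * ‖gradient (G ∘ diag d) ((2 * N : ℝ)⁻¹ • (broadcast N d).adjoint x)‖ ≤
      L * ‖x - (2 * N : ℝ)⁻¹ • broadcast N d ((broadcast N d).adjoint
        (x - (1 / (2 * L)) • gradient (fun z => ∑ i, G (pair N d i z)) x))‖ := by
  set B := broadcast N d
  set D := diag d
  set xbar := (2 * N : ℝ)⁻¹ • B.adjoint x
  set W := ∑ i, D.adjoint (gradient G (pair N d i x))
  have hgrad_g : gradient (G ∘ D) xbar = D.adjoint (gradient G (D xbar)) :=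
    ((hG _).hasGradientAt.comp_continuousLinearMap D).gradient
  have hW : B.adjoint (gradient (fun z => ∑ i, G (pair N d i z)) x) = W := by
    rw [(hasGradientAt_sum_comp hG _ x).gradient, map_sum]
    simp only [← ContinuousLinearMap.comp_apply, ← ContinuousLinearMap.adjoint_comp,
      B, pair_comp_broadcast, W, D]
  have hR := norm_sq_sub_smul_adjoint B (m := 2 * N) (by positivity)
    (adjoint_broadcast_broadcast N d) x
    ((1 / (2 * L)) • gradient (fun z => ∑ i, G (pair N d i z)) x)
  rw [map_smul B.adjoint (1 / (2 * L)), hW, norm_smul] at hR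
  have hsum : ∑ i, ‖D xbar - pair N d i x‖ ≤ √N * ‖x - B xbar‖ := by
    have hi : ∀ i, D xbar - pair N d i x = pair N d i (B xbar - x) := fun i => by
      rw [map_sub, ← ContinuousLinearMap.comp_apply, pair_comp_broadcast]
    have hsq := sq_sum_le_card_mul_sum_sq (s := Finset.univ)
      (f := fun i => ‖pair N d i (B xbar - x)‖)
    rw [sum_norm_sq_pair, Finset.card_univ, Fintype.card_fin, norm_sub_rev] at hsq
    simp only [hi]
    rw [← sqrt_sq (norm_nonneg (x - B xbar)), ← sqrt_mul (Nat.cast_nonneg N)]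
    exact (Real.le_sqrt (by positivity) (by positivity)).mpr hsq
  have hlip : N * ‖D.adjoint (gradient G (D xbar))‖
      ≤ ‖W‖ + √2 * L * ∑ i, ‖D xbar - pair N d i x‖ := by
    have hΦ : ∀ a b, ‖D.adjoint (gradient G a) - D.adjoint (gradient G b)‖ ≤ √2 * L * ‖a - b‖ :=
      fun a b => by
        rw [← map_sub, mul_assoc]
        exact (norm_adjoint_diag_le d _).trans (by gcongr; exact hGL a b)
    simpa using card_mul_norm_le_norm_sum_add hΦ (D xbar) (fun i => pair N d i x)
  rw [hgrad_g]
  refine sqrt_div_four_mul_le (a := ‖W‖) (s := ‖x - B xbar‖) (by positivity) hL (norm_nonneg _)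
    ?_ (hlip.trans (by gcongr))
  rw [hR, Real.norm_eq_abs, abs_of_pos (by positivity)]
  congr 1
  field_simp
  ring

end Consensus

open Consensus in
/-- For `f₀(x) = Σ_{i=1}^N G(x[i], x[N+i])` on `ℝ^{2Nd}` with `G` differentiable and
`L_f`-smooth, `X = {x : x[1] = ⋯ = x[2N]}`, `x̄` the block average, and `g(v) = G(v,v)`:
`L_f‖x - P_X(x - (1/(2L_f))∇f₀(x))‖ ≥ (√N/4)‖∇g(x̄)‖`, where `P_X` is the Euclidean
projection onto `X` (whose blocks all equal the block average). -/
theorem subopt_lower_bound_via_average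
    (N d : ℕ) (hN : 0 < N) (Lf : ℝ) (hLf : 0 < Lf)
    (G : EuclideanSpace ℝ (Fin d ⊕ Fin d) → ℝ)
    (hGdiff : Differentiable ℝ G)
    (hGsmooth : ∀ w w', ‖gradient G w - gradient G w'‖ ≤ Lf * ‖w - w'‖)
    (x : EuclideanSpace ℝ (Fin (2 * N) × Fin d))
    (f₀ : EuclideanSpace ℝ (Fin (2 * N) × Fin d) → ℝ)
    (hf₀ : ∀ z, f₀ z = ∑ i : Fin N,
      G (WithLp.toLp 2 (fun j => Sum.elim
          (fun s => z (⟨(i : ℕ), by have := i.isLt; omega⟩, s))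
          (fun s => z (⟨N + (i : ℕ), by have := i.isLt; omega⟩, s)) j)))
    (proj : EuclideanSpace ℝ (Fin (2 * N) × Fin d) → EuclideanSpace ℝ (Fin (2 * N) × Fin d))
    (hproj : ∀ z p, proj z p = (∑ k : Fin (2 * N), z (k, p.2)) / (2 * N))
    (xbar : EuclideanSpace ℝ (Fin d))
    (hxbar : ∀ j, xbar j = (∑ k : Fin (2 * N), x (k, j)) / (2 * N))
    (g : EuclideanSpace ℝ (Fin d) → ℝ)
    (hg : ∀ v, g v = G (WithLp.toLp 2 (fun j => Sum.elim (fun s => v s) (fun s => v s) j))) :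
    Real.sqrt N / 4 * ‖gradient g xbar‖ ≤
      Lf * ‖x - proj (x - (1 / (2 * Lf)) • gradient f₀ x)‖ := by
  have hf : f₀ = fun z => ∑ i, G (pair N d i z) := by
    funext z
    rw [hf₀]
    congr! 2 with i
    ext (s | s) <;> rfl
  have hgD : g = G ∘ diag d := by
    funext v
    rw [hg]
    congr 1
    ext (s | s) <;> rfl
  have hP : proj = fun z => (2 * N : ℝ)⁻¹ • broadcast N d ((broadcast N d).adjoint z) := by
    funext z
    ext p
    simp [hproj, broadcast_apply, adjoint_broadcast_apply, div_eq_inv_mul]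
  have hx : xbar = (2 * N : ℝ)⁻¹ • (broadcast N d).adjoint x := by
    ext j
    simp [hxbar, adjoint_broadcast_apply, div_eq_inv_mul]
  subst hf hgD hP hx
  exact sqrt_div_four_mul_norm_gradient_le N d hN hGdiff hLf hGsmooth x
end
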